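/- arXiv:2208.02153 — 10 statements merged into one kernel-verified Lean document; each statement's English description precedes it below -/
import Mathlib

section
/- Let G be a finite simple graph and let W be a walk in G that visits every vertex of G and whose start and end vertices are adjacent in G (i.e., W is a k-Unbounded Hamiltonian Cycle for some k). Then every cut vertex of G occurs at least twice in the vertex sequence of W; equivalently, no cut vertex of G is bounded in W. -/
open SimpleGraph

/-- A vertex `v` is a cut vertex of `G` if deleting it strictly increases the number of
connected components. -/
def IsCutVertex {V : Type*} (G : SimpleGraph V) (v : V) : Prop :=
  Nat.card G.ConnectedComponent < Nat.card (G.induce {w | w ≠ v}).ConnectedComponent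

private lemma reach_avoid {V : Type*} {G : SimpleGraph V} {v : V} :
    ∀ {u w : V} (p : G.Walk u w), v ∉ p.support →
      ∀ (hu : u ≠ v) (hw : w ≠ v),
      (G.induce {x | x ≠ v}).Reachable ⟨u, hu⟩ ⟨w, hw⟩ := by
  intro u w p
  induction p with
  | nil => intro _ hu hw; exact Reachable.refl _
  | @cons u c w h p ih =>
    intro hv hu hw
    rw [SimpleGraph.Walk.support_cons, List.mem_cons] at hv
    push_neg at hv
    have hnext : c ≠ v := fun he => hv.2 (he ▸ p.start_mem_support)
    have hadj : (G.induce {x | x ≠ v}).Adj ⟨u, hu⟩ ⟨c, hnext⟩ := h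
    exact hadj.reachable.trans (ih hv.2 hnext hw)

private lemma reach_to_head {V : Type*} [DecidableEq V] {G : SimpleGraph V} {v y : V}
    (r : G.Walk v y) (ht : v ∉ r.support.tail) (hy : y ≠ v)
    {x : V} (hx : x ∈ r.support) (hxv : x ≠ v) :
    (G.induce {w | w ≠ v}).Reachable ⟨x, hxv⟩ ⟨y, hy⟩ := by
  cases r with
  | nil => exact absurd rfl hy
  | @cons _ c _ h r' =>
    rw [SimpleGraph.Walk.support_cons, List.mem_cons] at hx
    have hx' : x ∈ r'.support := hx.resolve_left hxv
    have ht' : v ∉ r'.support := by simpa using ht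
    exact reach_avoid (r'.dropUntil x hx')
      (fun hmem => ht' (SimpleGraph.Walk.support_dropUntil_subset _ hx' hmem)) hxv hy

/-- If `W` is a walk in a finite simple graph `G` that visits every vertex and whose start and
end vertices are adjacent (a k-Unbounded Hamiltonian Cycle), then every cut vertex of `G`
occurs at least twice in the vertex sequence of `W`. -/
theorem cut_vertex_unbounded_in_unbounded_hamiltonian_cycle
    {V : Type*} [Fintype V] [DecidableEq V] (G : SimpleGraph V)
    {a b : V} (hab : G.Adj a b) (W : G.Walk a b) (hW : ∀ x : V, x ∈ W.support)
    (v : V) (hv : IsCutVertex G v) :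
    1 < W.support.count v := by
  by_contra hcon
  push_neg at hcon
  have h1 : 1 ≤ W.support.count v := List.count_pos_iff.mpr (hW v)
  have hcount : W.support.count v = 1 := le_antisymm hcon h1
  -- G is connected
  have hGpre : G.Preconnected := by
    intro x y
    exact ((W.takeUntil x (hW x)).reverse.reachable).trans (W.takeUntil y (hW y)).reachable
  have hGcard : Nat.card G.ConnectedComponent = 1 := by
    rw [Nat.card_eq_one_iff_unique]
    refine ⟨⟨fun c d => ?_⟩, ⟨G.connectedComponentMk a⟩⟩
    refine ConnectedComponent.ind₂ (fun x y => ?_) c d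
    exact ConnectedComponent.sound (hGpre x y)
  -- split W at v
  have hW' : (W.takeUntil v (hW v)).append (W.dropUntil v (hW v)) = W := W.take_spec (hW v)
  set p := W.takeUntil v (hW v) with hp
  set q := W.dropUntil v (hW v) with hq
  have hcountp : p.support.count v = 1 := W.count_support_takeUntil_eq_one (hW v)
  have hsup : W.support = p.support ++ q.support.tail := by
    rw [← hW', SimpleGraph.Walk.support_append]
  have hqt : q.support.tail.count v = 0 := by
    have h2 := hcount
    rw [hsup, List.count_append, hcountp] at h2
    omega
  have hq1 : q.support.count v = 1 := by
    rw [q.support_eq_cons, List.count_cons]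
    simp [hqt]
  -- the closed walk
  set C : G.Walk v v := q.append (SimpleGraph.Walk.cons hab.symm p) with hC
  have hCsup : C.support = q.support ++ p.support := by
    rw [hC, SimpleGraph.Walk.support_append, SimpleGraph.Walk.support_cons, List.tail_cons]
  have hCcount : C.support.count v = 2 := by
    rw [hCsup, List.count_append, hcountp, hq1]
  have hall : ∀ x : V, x ∈ C.support := by
    intro x
    have hx := hW x
    rw [hsup] at hx
    rw [hCsup]
    rcases List.mem_append.mp hx with h | h
    · exact List.mem_append.mpr (Or.inr h)
    · exact List.mem_append.mpr (Or.inl (List.mem_of_mem_tail h))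
  have hnn : ¬ C.Nil := by
    intro hnil
    have hlen : C.support.length = 1 := by
      rw [SimpleGraph.Walk.length_support, SimpleGraph.Walk.nil_iff_length_eq.mp hnil]
    have := List.count_le_length (l := C.support) (a := v)
    omega
  obtain ⟨c, hvc, C', hCeq⟩ := SimpleGraph.Walk.not_nil_iff.mp hnn
  have hc : c ≠ v := (G.ne_of_adj hvc).symm
  have hC'count : C'.support.count v = 1 := by
    have := hCcount
    rw [hCeq, SimpleGraph.Walk.support_cons, List.count_cons] at this
    simpa using this
  have hrt : v ∉ C'.reverse.support.tail := by
    intro hmem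
    have h3 : C'.reverse.support.count v = 1 := by
      rw [SimpleGraph.Walk.support_reverse, List.count_reverse]; exact hC'count
    have h4 : C'.reverse.support = v :: C'.reverse.support.tail :=
      C'.reverse.support_eq_cons
    rw [h4, List.count_cons_self] at h3
    have h5 : 0 < C'.reverse.support.tail.count v := List.count_pos_iff.mpr hmem
    omega
  have hreach : ∀ (x : V) (hx : x ≠ v),
      (G.induce {w | w ≠ v}).Reachable ⟨x, hx⟩ ⟨c, hc⟩ := by
    intro x hx
    have hxC : x ∈ C.support := hall x
    rw [hCeq, SimpleGraph.Walk.support_cons, List.mem_cons] at hxC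
    have hxC' : x ∈ C'.support := hxC.resolve_left hx
    have hxr : x ∈ C'.reverse.support := by
      rw [SimpleGraph.Walk.support_reverse, List.mem_reverse]; exact hxC'
    exact reach_to_head C'.reverse hrt hc hxr hx
  have hIndCard : Nat.card (G.induce {w | w ≠ v}).ConnectedComponent = 1 := by
    rw [Nat.card_eq_one_iff_unique]
    refine ⟨⟨fun cc dd => ?_⟩, ⟨(G.induce {w | w ≠ v}).connectedComponentMk ⟨c, hc⟩⟩⟩
    refine ConnectedComponent.ind₂ (fun x y => ?_) cc dd
    exact ConnectedComponent.sound ((hreach x.1 x.2).trans (hreach y.1 y.2).symm)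
  rw [IsCutVertex, hGcard, hIndCard] at hv
  exact lt_irrefl 1 hv
end

section
/- Let G be a finite simple graph and let v be a cut vertex of G such that deleting v from G leaves at least 3 connected components. Then in every walk of G that visits every vertex of G, the vertex v occurs at least twice; equivalently, v is unbounded in every k-Unbounded Hamiltonian Path of G. -/
/-!
Between two consecutive visits of `v`, a walk stays inside a single component of `G - v`.
Hence a walk meets at most one more component of `G - v` than the number of times it returns
to `v` after its start, and a walk through every vertex meets every component.
-/

open SimpleGraph

namespace SimpleGraph.Walk

variable {V : Type*} {G : SimpleGraph V} (v : V)

def componentsMet {u w : V} (p : G.Walk u w) : Set (G.induce {x | x ≠ v}).ConnectedComponent :=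
  (G.induce {x | x ≠ v}).connectedComponentMk '' {x | (x : V) ∈ p.support}

variable {v}

theorem componentsMet_cons_of_eq {c w : V} (h : G.Adj v c) (p : G.Walk c w) :
    (cons h p).componentsMet v = p.componentsMet v := by
  ext C
  simp only [componentsMet, Set.mem_image, Set.mem_ofPred_eq, support_cons, List.mem_cons]
  constructor
  · rintro ⟨x, hx | hx, rfl⟩
    · exact absurd hx x.2
    · exact ⟨x, hx, rfl⟩
  · rintro ⟨x, hx, rfl⟩
    exact ⟨x, Or.inr hx, rfl⟩

theorem componentsMet_cons_of_ne {u c w : V} (hu : u ≠ v) (h : G.Adj u c) (p : G.Walk c w) :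
    (cons h p).componentsMet v =
      insert ((G.induce {x | x ≠ v}).connectedComponentMk ⟨u, hu⟩) (p.componentsMet v) := by
  ext C
  simp only [componentsMet, Set.mem_insert_iff, Set.mem_image, Set.mem_ofPred_eq, support_cons,
    List.mem_cons]
  constructor
  · rintro ⟨x, hx | hx, rfl⟩
    · exact Or.inl (congrArg _ (Subtype.ext hx))
    · exact Or.inr ⟨x, hx, rfl⟩
  · rintro (rfl | ⟨x, hx, rfl⟩)
    · exact ⟨⟨u, hu⟩, Or.inl rfl, rfl⟩
    · exact ⟨x, Or.inr hx, rfl⟩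

theorem componentsMet_eq_univ {u w : V} (p : G.Walk u w) (hp : ∀ x, x ∈ p.support) :
    p.componentsMet v = Set.univ :=
  Set.eq_univ_of_forall fun C => C.ind fun x => ⟨x, hp x, rfl⟩

theorem ncard_componentsMet_le [DecidableEq V] {u w : V} (p : G.Walk u w) :
    (p.componentsMet v).ncard ≤ p.support.tail.count v + 1 := by
  induction p with
  | @nil x =>
    have hsub : ((nil : G.Walk x x).componentsMet v).Subsingleton := by
      rintro _ ⟨y, hy, rfl⟩ _ ⟨z, hz, rfl⟩
      rw [Set.mem_ofPred_eq, support_nil, List.mem_singleton] at hy hz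
      exact congrArg _ (Subtype.ext (hy.trans hz.symm))
    calc _ ≤ 1 := (Set.ncard_le_one hsub.finite).2 hsub
      _ ≤ _ := Nat.le_add_left 1 _
  | @cons x c y h p ih =>
    rw [support_cons, List.tail_cons]
    have hp : p.support.tail.count v ≤ p.support.count v := (List.tail_sublist _).count_le v
    by_cases hx : x = v
    · subst hx
      rw [componentsMet_cons_of_eq]
      omega
    rw [componentsMet_cons_of_ne hx]
    by_cases hc : c = v
    · subst hc
      have hstart : p.support.count c = p.support.tail.count c + 1 := by
        rw [← p.cons_tail_support, List.count_cons_self, List.tail_cons]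
      calc _ ≤ (p.componentsMet c).ncard + 1 := Set.ncard_insert_le _ _
        _ ≤ _ := by omega
    · have hmem : (G.induce {x | x ≠ v}).connectedComponentMk ⟨x, hx⟩ ∈ p.componentsMet v :=
        ⟨⟨c, hc⟩, p.start_mem_support,
          (ConnectedComponent.connectedComponentMk_eq_of_adj (induce_adj.2 h)).symm⟩
      rw [Set.insert_eq_of_mem hmem]
      omega

end SimpleGraph.Walk

theorem cut_vertex_three_components_unbounded_in_every_spanning_walk_general
    {V : Type*} [DecidableEq V] (G : SimpleGraph V)
    (v : V)
    (h3 : 3 ≤ Nat.card (G.induce {w | w ≠ v}).ConnectedComponent)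
    {a b : V} (W : G.Walk a b) (hW : ∀ x : V, x ∈ W.support) :
    1 < W.support.count v := by
  have hcard : Nat.card (G.induce {w | w ≠ v}).ConnectedComponent ≤ W.support.count v + 1 :=
    calc Nat.card (G.induce {w | w ≠ v}).ConnectedComponent
        = (W.componentsMet v).ncard := by rw [W.componentsMet_eq_univ hW, Set.ncard_univ]
      _ ≤ W.support.tail.count v + 1 := W.ncard_componentsMet_le
      _ ≤ W.support.count v + 1 := by gcongr; exact (List.tail_sublist _).count_le v
  omega

/-- If `v` is a cut vertex of a finite simple graph `G` whose deletion leaves at least 3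
connected components, then `v` occurs at least twice in every walk of `G` that visits every
vertex, i.e. `v` is unbounded in every k-Unbounded Hamiltonian Path of `G`. -/
theorem cut_vertex_three_components_unbounded_in_every_spanning_walk
    {V : Type*} [Fintype V] [DecidableEq V] (G : SimpleGraph V)
    (v : V) (hv : IsCutVertex G v)
    (h3 : 3 ≤ Nat.card (G.induce {w | w ≠ v}).ConnectedComponent)
    {a b : V} (W : G.Walk a b) (hW : ∀ x : V, x ∈ W.support) :
    1 < W.support.count v :=
  cut_vertex_three_components_unbounded_in_every_spanning_walk_general G v h3 W hW
end

section
/- Let T be a finite tree with at least 2 vertices. Then the minimum k such that T contains a k-Unbounded Hamiltonian Cycle equals the number of vertices of T of degree at least 2 (the non-leaf vertices). In particular, there exists a walk visiting every vertex of T with adjacent start and end vertices in which the unbounded vertices are exactly the non-leaf vertices, and in every walk visiting every vertex of T with adjacent start and end vertices, every non-leaf vertex occurs at least twice. -/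
/-!
A closed walk that runs down and back up every edge of a tree passes each vertex `v`, counted
cyclically, exactly `deg v` times; dropping its first step leaves a walk between adjacent
vertices in which precisely the leaves are bounded. Such a tour is grown one pendant edge at a
time: a vertex `v` off the tour has a unique neighbour `u` on it (two would close a cycle), and
the detour `u → v → u` is spliced in at `u`.

Conversely, if `x` has two neighbours `u ≠ v`, then both arcs between `u` and `v` of a closed walk
through them pass through `x`, because `u - x - v` is the only path from `u` to `v`; so `x` occurs
twice. A walk between adjacent vertices closes up to such a closed walk.
-/

open SimpleGraph Finset

namespace SimpleGraph

variable {V : Type*} {G : SimpleGraph V}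

theorem IsAcyclic.mem_support_tail_of_adj_of_adj (hG : G.IsAcyclic) {x u v : V}
    (hxu : G.Adj x u) (hxv : G.Adj x v) (huv : u ≠ v) (p : G.Walk u v) :
    x ∈ p.support.tail := by
  classical
  have hpath : (Walk.cons hxu.symm (Walk.cons hxv Walk.nil)).IsPath := by
    simp [Walk.isPath_def, hxu.ne', hxv.ne, huv]
  have hbypass : p.bypass = _ := congrArg Subtype.val
    ((hG.subsingleton_path u v).elim ⟨p.bypass, p.bypass_isPath⟩ ⟨_, hpath⟩)
  have hx : x ∈ p.support := p.support_bypass_subset_support (by simp [hbypass])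
  exact ((p.mem_support_iff).mp hx).resolve_left hxu.ne

theorem IsAcyclic.eq_of_adj_of_notMem_support (hG : G.IsAcyclic) {a b u v t : V} (p : G.Walk a b)
    (hu : u ∈ p.support) (ht : t ∈ p.support) (hv : v ∉ p.support) (huv : G.Adj u v)
    (htv : G.Adj t v) : t = u := by
  classical
  by_contra htu
  have hsub := List.mem_of_mem_tail <| hG.mem_support_tail_of_adj_of_adj htv.symm huv.symm htu
    ((p.takeUntil t ht).reverse.append (p.takeUntil u hu))
  simp only [Walk.mem_support_append_iff, Walk.support_reverse, List.mem_reverse] at hsub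
  exact hv (hsub.elim (p.support_takeUntil_subset_support ht ·)
    (p.support_takeUntil_subset_support hu ·))

variable [DecidableEq V]

theorem IsAcyclic.one_lt_count_support_tail (hG : G.IsAcyclic) {r x u v : V} (hxu : G.Adj x u)
    (hxv : G.Adj x v) (huv : u ≠ v) (C : G.Walk r r) (hu : u ∈ C.support)
    (hv : v ∈ C.support) : 1 < C.support.tail.count x := by
  set R := C.rotate u hu
  have hvR : v ∈ R.support := by simpa [R] using hv
  have hsplit : R.support.tail =
      (R.takeUntil v hvR).support.tail ++ (R.dropUntil v hvR).support.tail := by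
    rw [← Walk.tail_support_append, Walk.take_spec]
  have h₁ := List.count_pos_iff.mpr <|
    hG.mem_support_tail_of_adj_of_adj hxu hxv huv (R.takeUntil v hvR)
  have h₂ := List.count_pos_iff.mpr <|
    hG.mem_support_tail_of_adj_of_adj hxv hxu huv.symm (R.dropUntil v hvR)
  rw [← (C.support_rotate u hu).perm.count_eq, hsplit, List.count_append]
  omega

theorem Walk.mem_support_cons_cons_rotate_iff {r u v t : V} {C : G.Walk r r}
    (hu : u ∈ C.support) (huv : G.Adj u v) :
    t ∈ (Walk.cons huv (Walk.cons huv.symm (C.rotate u hu))).support ↔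
      t = v ∨ t ∈ C.support := by
  simp only [Walk.support_cons, List.mem_cons, Walk.mem_support_rotate_iff]
  grind

variable [Fintype V] [DecidableRel G.Adj]

/-- The occurrence counts of a walk around the subtree spanned by the vertices of `C`, which
traverses each edge of that subtree once in each direction. -/
def Walk.IsSubtreeTour {r : V} (C : G.Walk r r) : Prop :=
  ∀ w ∈ C.support, C.support.tail.count w = #{t ∈ G.neighborFinset w | t ∈ C.support}

theorem Walk.IsSubtreeTour.cons_cons_rotate (hG : G.IsAcyclic) {r u v : V} {C : G.Walk r r}
    (hC : C.IsSubtreeTour) (hu : u ∈ C.support) (hv : v ∉ C.support) (huv : G.Adj u v) :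
    (Walk.cons huv (Walk.cons huv.symm (C.rotate u hu))).IsSubtreeTour := by
  have hunique : ∀ t ∈ C.support, G.Adj t v ↔ t = u := fun t ht =>
    ⟨hG.eq_of_adj_of_notMem_support C hu ht hv huv, fun h => h ▸ huv⟩
  have hcount : ∀ w, (Walk.cons huv (Walk.cons huv.symm (C.rotate u hu))).support.tail.count w
      = (if v = w then 1 else 0) + (if u = w then 1 else 0) + C.support.tail.count w := by
    intro w
    rw [Walk.support_cons, List.tail_cons, Walk.support_cons, ← Walk.cons_tail_support,
      List.count_cons, List.count_cons, (C.support_rotate u hu).perm.count_eq]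
    simp only [beq_iff_eq]
    omega
  have hnbr : ∀ w, #{t ∈ G.neighborFinset w | t = v ∨ t ∈ C.support}
      = #{t ∈ G.neighborFinset w | t ∈ C.support} + (if G.Adj w v then 1 else 0) := by
    intro w
    rw [filter_or, card_union_of_disjoint, filter_eq', add_comm]
    · split_ifs <;> simp_all
    · exact disjoint_filter.mpr fun t _ htv htC => hv (htv ▸ htC)
  intro w hw
  simp only [Walk.mem_support_cons_cons_rotate_iff] at hw ⊢
  rw [hcount, hnbr]
  rcases hw with rfl | hw
  · have hsingle : {t ∈ G.neighborFinset w | t ∈ C.support} = {u} := by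
      ext t
      simp only [mem_filter, mem_neighborFinset, mem_singleton]
      exact ⟨fun ⟨hwt, ht⟩ => (hunique t ht).mp hwt.symm, fun h => h ▸ ⟨huv.symm, hu⟩⟩
    have hw : C.support.tail.count w = 0 :=
      List.count_eq_zero.mpr fun h => hv (List.mem_of_mem_tail h)
    simp [hsingle, hw, huv.ne]
  · have hvw : v ≠ w := fun h => hv (h ▸ hw)
    simp only [hC w hw, if_neg hvw, hunique w hw, eq_comm (a := u)]
    omega

theorem IsAcyclic.one_lt_count_support_of_adj (hG : G.IsAcyclic) {a b x : V} (hab : G.Adj a b)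
    (W : G.Walk a b) (hW : ∀ y, G.Adj x y → y ∈ W.support) (hx : 2 ≤ G.degree x) :
    1 < W.support.count x := by
  rw [← card_neighborFinset_eq_degree] at hx
  obtain ⟨u, hu, v, hv, huv⟩ := one_lt_card.mp hx
  rw [mem_neighborFinset] at hu hv
  simpa using hG.one_lt_count_support_tail hu hv huv (W.cons hab.symm)
    (by simp [hW u hu]) (by simp [hW v hv])

theorem IsTree.exists_isSubtreeTour_of_lt_card (hG : G.IsTree) :
    ∀ k < Fintype.card V,
      ∃ (r : V) (C : G.Walk r r), C.IsSubtreeTour ∧ k < C.support.toFinset.card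
  | 0, _ => by
    obtain ⟨r⟩ := hG.connected.nonempty
    refine ⟨r, Walk.nil, fun w hw => ?_, by simp⟩
    obtain rfl : w = r := by simpa using hw
    simp [filter_eq']
  | k + 1, hk => by
    obtain ⟨r, C, hC, hkC⟩ := hG.exists_isSubtreeTour_of_lt_card k (by omega)
    rcases (Nat.succ_le_of_lt hkC).lt_or_eq with hlt | heq
    · exact ⟨r, C, hC, hlt⟩
    obtain ⟨v, -, hv⟩ := exists_mem_notMem_of_card_lt_card (s := C.support.toFinset)
      (t := univ) (by rw [card_univ]; omega)
    rw [List.mem_toFinset] at hv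
    obtain ⟨d, -, hd₁, hd₂⟩ := (hG.connected.preconnected r v).some.exists_boundary_dart
      {t | t ∈ C.support} C.start_mem_support hv
    refine ⟨_, _, hC.cons_cons_rotate hG.isAcyclic hd₁ hd₂ d.adj, ?_⟩
    have hsupp : (Walk.cons d.adj (Walk.cons d.adj.symm (C.rotate d.fst hd₁))).support.toFinset
        = insert d.snd C.support.toFinset := by
      ext t
      simp only [List.mem_toFinset, mem_insert, Walk.mem_support_cons_cons_rotate_iff]
    rw [hsupp, card_insert_of_notMem (by simpa using hd₂)]
    omega

theorem IsTree.exists_adj_walk_count_support_eq_degree [Nontrivial V] (hG : G.IsTree) :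
    ∃ (a b : V) (_ : G.Adj a b) (W : G.Walk a b), ∀ w, W.support.count w = G.degree w := by
  obtain ⟨r, C, hC, hcard⟩ := hG.exists_isSubtreeTour_of_lt_card
    (Fintype.card V - 1) (by have := Fintype.card_pos (α := V); omega)
  have hspan : ∀ w, w ∈ C.support := by
    have huniv := eq_univ_of_card C.support.toFinset
      (by have := card_le_univ C.support.toFinset; omega)
    simpa [eq_univ_iff_forall] using huniv
  have hdeg : ∀ w, C.support.tail.count w = G.degree w := fun w => by
    rw [hC w (hspan w), filter_true_of_mem fun t _ => hspan t, card_neighborFinset_eq_degree]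
  cases C with
  | nil =>
    have := hG.connected.preconnected.degree_pos_of_nontrivial r
    simp [← hdeg r] at this
  | cons h W => exact ⟨_, _, h.symm, W, by simpa using hdeg⟩

end SimpleGraph

/-- For a finite tree `T` with at least 2 vertices, the minimum `k` such that `T` contains a
`k`-Unbounded Hamiltonian Cycle equals the number of non-leaf vertices (vertices of degree at
least 2).  In particular there is a spanning walk with adjacent endpoints whose unbounded
vertices are exactly the non-leaf vertices, and in every spanning walk with adjacent endpoints
every non-leaf vertex occurs at least twice. -/
theorem tree_min_unbounded_hamiltonian_cycle_eq_card_nonleaves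
    {V : Type*} [Fintype V] [DecidableEq V] (G : SimpleGraph V) [DecidableRel G.Adj]
    (hT : G.IsTree) (hn : 2 ≤ Fintype.card V) :
    IsLeast {k : ℕ | ∃ (a b : V) (_ : G.Adj a b) (W : G.Walk a b),
        (∀ x : V, x ∈ W.support) ∧
        (Finset.univ.filter fun x : V => 1 < W.support.count x).card = k}
      (Finset.univ.filter fun v : V => 2 ≤ G.degree v).card ∧
    (∃ (a b : V) (_ : G.Adj a b) (W : G.Walk a b),
        (∀ x : V, x ∈ W.support) ∧
        ∀ x : V, 1 < W.support.count x ↔ 2 ≤ G.degree x) ∧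
    (∀ (a b : V) (_ : G.Adj a b) (W : G.Walk a b), (∀ x : V, x ∈ W.support) →
        ∀ x : V, 2 ≤ G.degree x → 1 < W.support.count x) := by
  have : Nontrivial V := Fintype.one_lt_card_iff_nontrivial.mp hn
  have hdeg_pos := hT.connected.preconnected.degree_pos_of_nontrivial
  have hlower : ∀ (a b : V) (_ : G.Adj a b) (W : G.Walk a b), (∀ x : V, x ∈ W.support) →
      ∀ x : V, 2 ≤ G.degree x → 1 < W.support.count x := fun a b hab W hW x =>
    hT.isAcyclic.one_lt_count_support_of_adj hab W fun y _ => hW y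
  obtain ⟨a, b, hab, W, hW⟩ := hT.exists_adj_walk_count_support_eq_degree
  have hspan : ∀ x, x ∈ W.support := fun x => List.count_pos_iff.mp (hW x ▸ hdeg_pos x)
  have hiff : ∀ x, 1 < W.support.count x ↔ 2 ≤ G.degree x := fun x => by rw [hW x]; omega
  refine ⟨⟨⟨a, b, hab, W, hspan, by simp only [hiff]⟩, ?_⟩,
    ⟨a, b, hab, W, hspan, hiff⟩, hlower⟩
  rintro k ⟨a', b', hab', W', hW', rfl⟩
  exact card_le_card (monotone_filter_right _ fun x _ => hlower a' b' hab' W' hW' x)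
end

section
/- Let T be a finite tree with at least 2 vertices. Then there exists a walk visiting every vertex of T with adjacent start and end vertices that achieves the minimum possible number of unbounded vertices and in which every leaf of T occurs exactly once (i.e., every leaf is bounded). -/
open SimpleGraph

section Aux

variable {V : Type*} [Fintype V] [DecidableEq V] {G : SimpleGraph V} [DecidableRel G.Adj]

lemma my_uniq_nbr {x p q : V} (h : G.degree x = 1) (hp : G.Adj x p) (hq : G.Adj x q) :
    p = q := by
  rw [degree, Finset.card_eq_one] at h
  obtain ⟨c, hc⟩ := h
  have h1 : p ∈ G.neighborFinset x := by rwa [mem_neighborFinset]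
  have h2 : q ∈ G.neighborFinset x := by rwa [mem_neighborFinset]
  rw [hc, Finset.mem_singleton] at h1 h2
  rw [h1, h2]

lemma my_exists_closed_spanning (hc : G.Connected) (a : V) :
    ∃ C : G.Walk a a, ∀ x : V, x ∈ C.support := by
  have key : ∀ l : List V, ∃ C : G.Walk a a, ∀ x ∈ l, x ∈ C.support := by
    intro l
    induction l with
    | nil => exact ⟨Walk.nil, by simp⟩
    | cons v l ih =>
      obtain ⟨C, hC⟩ := ih
      obtain ⟨p⟩ := hc a v
      refine ⟨(p.append p.reverse).append C, ?_⟩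
      intro x hx
      rw [Walk.mem_support_append_iff, Walk.mem_support_append_iff]
      rcases List.mem_cons.mp hx with rfl | hx
      · exact Or.inl (Or.inl p.end_mem_support)
      · exact Or.inr (hC x hx)
  obtain ⟨C, hC⟩ := key Finset.univ.toList
  exact ⟨C, fun x => hC x (by simp)⟩

/-- Surgery for a leaf `x` with `x ≠ b` occurring at least twice: get a strictly shorter
spanning walk with adjacent endpoints and pointwise smaller counts. -/
lemma my_surgery_aux {x a b : V} (hab : G.Adj a b) (W : G.Walk a b)
    (hspan : ∀ v : V, v ∈ W.support)
    (hleaf : G.degree x = 1) (hcount : 2 ≤ W.support.count x) (hxb : x ≠ b) :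
    ∃ (a' b' : V) (_ : G.Adj a' b') (W' : G.Walk a' b'),
      (∀ v : V, v ∈ W'.support) ∧ (∀ v : V, W'.support.count v ≤ W.support.count v) ∧
      W'.length < W.length := by
  by_cases hxa : x = a
  · -- x is the start; the second vertex must be b (unique neighbor), drop first two steps
    subst hxa
    obtain ⟨c, h₁, W₂, rfl⟩ := Walk.exists_eq_cons_of_ne hab.ne W
    have hcb : c = b := my_uniq_nbr hleaf h₁ hab
    have hxmem : x ∈ W₂.support := by
      have := hcount
      rw [Walk.support_cons, List.count_cons_self] at this
      have : 1 ≤ W₂.support.count x := by omega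
      exact List.count_pos_iff.mp (by omega)
    have hW₂nil : ¬ W₂.Nil := by
      intro h
      rw [Walk.nil_iff_support_eq] at h
      rw [h] at hxmem
      simp at hxmem
      exact h₁.ne hxmem
    obtain ⟨d, h₂, W₃, rfl⟩ := Walk.not_nil_iff.mp hW₂nil
    have hadj : G.Adj d b := by rw [← hcb]; exact h₂.symm
    refine ⟨d, b, hadj, W₃, ?_, ?_, ?_⟩
    · intro v
      by_cases hvx : v = x
      · subst hvx
        rcases List.mem_cons.mp hxmem with h | h
        · exact absurd h h₁.ne
        · exact h
      · by_cases hvc : v = c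
        · subst hvc; rw [hcb]; exact W₃.end_mem_support
        · have := hspan v
          rw [Walk.support_cons, Walk.support_cons] at this
          rcases List.mem_cons.mp this with h | h
          · exact absurd h hvx
          · rcases List.mem_cons.mp h with h | h
            · exact absurd h hvc
            · exact h
    · intro v
      rw [Walk.support_cons, Walk.support_cons, List.count_cons, List.count_cons]
      omega
    · simp [Walk.length_cons]
  · -- x is internal: cut out one occurrence of x together with one neighbor visit
    have hxmem : x ∈ W.support := hspan x
    set W₁ := W.takeUntil x hxmem with hW₁
    set W₂ := W.dropUntil x hxmem with hW₂
    have hspec : W₁.append W₂ = W := W.take_spec hxmem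
    have hone : W₁.support.count x = 1 := W.count_support_takeUntil_eq_one hxmem
    -- decompose W₁ from the back via its reverse
    have hW₁nil : ¬ W₁.reverse.Nil := Walk.not_nil_of_ne (fun h => hxa h)
    obtain ⟨p, hp, R, hR⟩ := Walk.not_nil_iff.mp hW₁nil
    -- decompose W₂ from the front
    obtain ⟨q, hq, T, hT⟩ := Walk.exists_eq_cons_of_ne hxb W₂
    have hpq : p = q := my_uniq_nbr hleaf hp hq
    subst hpq
    -- the new walk
    have hW1sup : W₁.support = R.reverse.support ++ [x] := by
      have h := congrArg Walk.support (congrArg Walk.reverse hR)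
      rw [Walk.reverse_reverse, Walk.support_reverse, Walk.support_cons] at h
      rw [h]
      simp [Walk.support_reverse]
    have hsupW : W.support = R.reverse.support ++ ([x] ++ (p :: T.support.tail)) := by
      rw [← hspec, Walk.support_append, hT, Walk.support_cons, hW1sup, List.tail_cons,
        ← T.support_eq_cons]
      simp
    have hsupN : (R.reverse.append T).support = R.reverse.support ++ T.support.tail := by
      rw [Walk.support_append]
    refine ⟨a, b, hab, R.reverse.append T, ?_, ?_, ?_⟩
    · -- spanning
      intro v
      have hv := hspan v
      rw [hsupW] at hv
      rw [hsupN]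
      simp only [List.mem_append, List.mem_cons, List.mem_singleton,
        List.not_mem_nil, or_false] at hv ⊢
      rcases hv with h | h | h | h
      · exact Or.inl h
      · -- v = x : show x ∈ T.support.tail using count ≥ 2
        subst h
        right
        have hcw : W.support.count v =
            R.reverse.support.count v + 1 + (p :: T.support.tail).count v := by
          rw [hsupW]; simp [List.count_append]; omega
        have hxp : v ≠ p := hp.ne
        have hRcount : R.reverse.support.count v = 0 := by
          have h1 : W₁.support.count v = R.reverse.support.count v + 1 := by
            rw [hW1sup]; simp
          omega
        have h2 : 1 ≤ (p :: T.support.tail).count v := by omega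
        have h3 : (p :: T.support.tail).count v = T.support.tail.count v := by
          rw [List.count_cons]; simp [hxp, Ne.symm hxp]
        exact List.count_pos_iff.mp (by omega)
      · subst h; exact Or.inl R.reverse.end_mem_support
      · exact Or.inr h
    · -- counts
      intro v
      rw [hsupN, hsupW]
      simp only [List.count_append, List.count_cons, List.count_singleton]
      omega
    · -- length
      have hlW : W.length = W₁.length + W₂.length := by
        rw [← hspec, Walk.length_append]
      have hl1 : W₁.length = R.length + 1 := by
        have h := congrArg Walk.length hR
        rw [Walk.length_reverse] at h
        rw [h]; simp
      have hl2 : W₂.length = T.length + 1 := by rw [hT]; simp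
      rw [Walk.length_append, Walk.length_reverse]
      omega

lemma my_surgery {x a b : V} (hab : G.Adj a b) (W : G.Walk a b)
    (hspan : ∀ v : V, v ∈ W.support)
    (hleaf : G.degree x = 1) (hcount : 2 ≤ W.support.count x) :
    ∃ (a' b' : V) (_ : G.Adj a' b') (W' : G.Walk a' b'),
      (∀ v : V, v ∈ W'.support) ∧ (∀ v : V, W'.support.count v ≤ W.support.count v) ∧
      W'.length < W.length := by
  by_cases hxb : x = b
  · subst hxb
    have hspan' : ∀ v : V, v ∈ W.reverse.support := by
      intro v; rw [Walk.support_reverse, List.mem_reverse]; exact hspan v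
    have hcount' : 2 ≤ W.reverse.support.count x := by
      rwa [Walk.support_reverse, List.count_reverse]
    obtain ⟨a', b', h', W', h1, h2, h3⟩ :=
      my_surgery_aux hab.symm W.reverse hspan' hleaf hcount' hab.ne'
    refine ⟨a', b', h', W', h1, ?_, ?_⟩
    · intro v
      have := h2 v
      rwa [Walk.support_reverse, List.count_reverse] at this
    · rwa [Walk.length_reverse] at h3
  · exact my_surgery_aux hab W hspan hleaf hcount hxb

end Aux

/-- For a finite tree `T` with at least 2 vertices, there is a walk visiting every vertex with
adjacent start and end vertices that achieves the minimum possible number of unbounded vertices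
(vertices occurring more than once) and in which every leaf occurs exactly once. -/
theorem tree_exists_min_unbounded_hamiltonian_cycle_with_bounded_leaves
    {V : Type*} [Fintype V] [DecidableEq V] (G : SimpleGraph V) [DecidableRel G.Adj]
    (hT : G.IsTree) (hn : 2 ≤ Fintype.card V) :
    ∃ (a b : V) (_ : G.Adj a b) (W : G.Walk a b),
      (∀ x : V, x ∈ W.support) ∧
      (∀ x : V, G.degree x = 1 → W.support.count x = 1) ∧
      ∀ (a' b' : V) (_ : G.Adj a' b') (W' : G.Walk a' b'), (∀ x : V, x ∈ W'.support) →
        (Finset.univ.filter fun x : V => 1 < W.support.count x).card ≤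
          (Finset.univ.filter fun x : V => 1 < W'.support.count x).card := by
  classical
  have hc : G.Connected := hT.isConnected
  -- there is at least one spanning walk with adjacent endpoints
  have hex : ∃ (a b : V) (_ : G.Adj a b) (W : G.Walk a b), ∀ x : V, x ∈ W.support := by
    obtain ⟨u, v, huv⟩ := Fintype.exists_pair_of_one_lt_card (α := V) (by omega)
    obtain ⟨p⟩ := hc u v
    obtain ⟨w, hadj, _, _⟩ := Walk.exists_eq_cons_of_ne huv p
    obtain ⟨C, hC⟩ := my_exists_closed_spanning hc u
    refine ⟨u, w, hadj, C.append (Walk.cons hadj Walk.nil), fun x => ?_⟩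
    rw [Walk.mem_support_append_iff]
    exact Or.inl (hC x)
  set P : ℕ → Prop := fun n => ∃ (a b : V) (_ : G.Adj a b) (W : G.Walk a b),
      (∀ x : V, x ∈ W.support) ∧
      (Finset.univ.filter fun x : V => 1 < W.support.count x).card = n with hPdef
  have hPex : ∃ n, P n := by
    obtain ⟨a, b, hab, W, hW⟩ := hex
    exact ⟨_, a, b, hab, W, hW, rfl⟩
  set n₀ := Nat.find hPex with hn₀
  set Q : ℕ → Prop := fun m => ∃ (a b : V) (_ : G.Adj a b) (W : G.Walk a b),
      (∀ x : V, x ∈ W.support) ∧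
      (Finset.univ.filter fun x : V => 1 < W.support.count x).card = n₀ ∧
      W.length = m with hQdef
  have hQex : ∃ m, Q m := by
    obtain ⟨a, b, hab, W, hW, hcard⟩ := Nat.find_spec hPex
    exact ⟨_, a, b, hab, W, hW, hcard, rfl⟩
  obtain ⟨a, b, hab, W, hspan, hcard, hlen⟩ := Nat.find_spec hQex
  refine ⟨a, b, hab, W, hspan, ?_, ?_⟩
  · intro x hx
    by_contra hne
    have h1 : 1 ≤ W.support.count x := List.count_pos_iff.mpr (hspan x)
    have h2 : 2 ≤ W.support.count x := by omega
    obtain ⟨a', b', h', W', h1', h2', h3'⟩ := my_surgery hab W hspan hx h2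
    have hle : (Finset.univ.filter fun v : V => 1 < W'.support.count v).card ≤
        (Finset.univ.filter fun v : V => 1 < W.support.count v).card := by
      apply Finset.card_le_card
      intro v hv
      rw [Finset.mem_filter] at hv ⊢
      exact ⟨hv.1, lt_of_lt_of_le hv.2 (h2' v)⟩
    have hPW' : P (Finset.univ.filter fun v : V => 1 < W'.support.count v).card :=
      ⟨a', b', h', W', h1', rfl⟩
    have hge : n₀ ≤ (Finset.univ.filter fun v : V => 1 < W'.support.count v).card :=
      Nat.find_min' hPex hPW'
    have heq : (Finset.univ.filter fun v : V => 1 < W'.support.count v).card = n₀ := by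
      omega
    have hQW' : Q W'.length := ⟨a', b', h', W', h1', heq, rfl⟩
    have := Nat.find_min' hQex hQW'
    omega
  · intro a' b' h' W' hspan'
    have hPW' : P (Finset.univ.filter fun x : V => 1 < W'.support.count x).card :=
      ⟨a', b', h', W', hspan', rfl⟩
    have := Nat.find_min' hPex hPW'
    rw [hcard]
    exact this
end

section
/- Let T be a finite tree with at least 2 vertices and let W be a walk in T visiting every vertex of T. Then there exists a walk W' in T visiting every vertex of T whose start and end vertices are both leaves of T and whose number of unbounded vertices is at most the number of unbounded vertices of W. Consequently, an m-Unbounded Hamiltonian Path of T (one with the minimum possible number of unbounded vertices) may always be chosen to start and end at leaves. -/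
open SimpleGraph

lemma mem_support_between_neighbors {V : Type*} {G : SimpleGraph V}
    (hT : G.IsTree) {u w1 w2 : V} (h1 : G.Adj u w1) (h2 : G.Adj u w2)
    (hne : w1 ≠ w2) (p : G.Walk w1 w2) : u ∈ p.support := by
  classical
  have hQ : (SimpleGraph.Walk.cons h1.symm (SimpleGraph.Walk.cons h2 SimpleGraph.Walk.nil)).IsPath := by
    simp [SimpleGraph.Walk.isPath_def, hne, h1.ne', h2.ne]
  have huniq := hT.existsUnique_path w1 w2
  obtain ⟨q, _, hq⟩ := huniq
  have h3 := hq _ hQ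
  have h4 := hq _ p.toPath.2
  have : (p.toPath : G.Walk w1 w2) = SimpleGraph.Walk.cons h1.symm (SimpleGraph.Walk.cons h2 SimpleGraph.Walk.nil) := by
    rw [h4, ← h3]
  have hu : u ∈ (p.toPath : G.Walk w1 w2).support := by
    rw [this]; simp
  exact SimpleGraph.Walk.support_toPath_subset p hu

lemma fix_start {V : Type*} [Fintype V] [DecidableEq V] (G : SimpleGraph V)
    [DecidableRel G.Adj] (hT : G.IsTree) (hn : 2 ≤ Fintype.card V) :
    ∀ n : ℕ, ∀ {u v : V} (W : G.Walk u v), W.length = n → (∀ x : V, x ∈ W.support) →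
    ∃ (a : V) (W' : G.Walk a v),
      G.degree a = 1 ∧ (∀ x : V, x ∈ W'.support) ∧
      (Finset.univ.filter fun x : V => 1 < W'.support.count x).card ≤
        (Finset.univ.filter fun x : V => 1 < W.support.count x).card := by
  intro n
  induction n using Nat.strong_induction_on with
  | _ n IH =>
    intro u v W hlen hW
    by_cases hdeg : G.degree u = 1
    · exact ⟨u, W, hdeg, hW, le_rfl⟩
    -- u is not a leaf; first show degree u ≥ 2
    obtain ⟨w0, hw0⟩ := Fintype.exists_ne_of_one_lt_card (by omega) u
    have hreach : G.Reachable u w0 := hT.isConnected.preconnected u w0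
    have hpos : 0 < G.degree u := by
      rw [G.degree_pos_iff_exists_adj]
      obtain ⟨q⟩ := hreach
      cases q with
      | nil => exact absurd rfl hw0.symm
      | cons h _ => exact ⟨_, h⟩
    have h2le : 1 < G.degree u := lt_of_le_of_ne hpos (Ne.symm hdeg)
    rw [← G.card_neighborFinset_eq_degree] at h2le
    obtain ⟨w1, hw1, w2, hw2, hne⟩ := Finset.one_lt_card.mp h2le
    rw [G.mem_neighborFinset] at hw1 hw2
    -- W is not nil
    cases W with
    | nil =>
      exfalso
      have := hW w0
      simp [SimpleGraph.Walk.support_nil] at this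
      exact hw0 this
    | @cons _ w _ h p =>
      -- show u ∈ p.support
      have hu : u ∈ p.support := by
        by_contra hu
        have hm1 : w1 ∈ p.support := by
          have := hW w1
          rw [SimpleGraph.Walk.support_cons, List.mem_cons] at this
          rcases this with h' | h'
          · exact absurd h' hw1.ne'
          · exact h'
        have hm2 : w2 ∈ p.support := by
          have := hW w2
          rw [SimpleGraph.Walk.support_cons, List.mem_cons] at this
          rcases this with h' | h'
          · exact absurd h' hw2.ne'
          · exact h'
        have hmem := mem_support_between_neighbors hT hw1 hw2 hne
          ((p.takeUntil w1 hm1).reverse.append (p.takeUntil w2 hm2))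
        rw [SimpleGraph.Walk.mem_support_append_iff] at hmem
        rcases hmem with h' | h'
        · rw [SimpleGraph.Walk.support_reverse, List.mem_reverse] at h'
          exact hu (SimpleGraph.Walk.support_takeUntil_subset _ _ h')
        · exact hu (SimpleGraph.Walk.support_takeUntil_subset _ _ h')
      -- p is still spanning
      have hp : ∀ x : V, x ∈ p.support := by
        intro x
        have := hW x
        rw [SimpleGraph.Walk.support_cons, List.mem_cons] at this
        rcases this with h' | h'
        · exact h' ▸ hu
        · exact h'
      have hlt : p.length < n := by
        subst hlen; simp [SimpleGraph.Walk.length_cons]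
      obtain ⟨a, W', hdega, hspan, hcount⟩ := IH p.length hlt p rfl hp
      refine ⟨a, W', hdega, hspan, le_trans hcount ?_⟩
      apply Finset.card_le_card
      intro x hx
      rw [Finset.mem_filter] at hx ⊢
      refine ⟨hx.1, lt_of_lt_of_le hx.2 ?_⟩
      rw [SimpleGraph.Walk.support_cons, List.count_cons]
      omega

/-- Let `T` be a finite tree with at least 2 vertices and `W` a walk visiting every vertex.
Then there is a walk `W'` visiting every vertex, starting and ending at leaves, whose number of
unbounded vertices (vertices occurring more than once) is at most that of `W`.  Consequently an
m-Unbounded Hamiltonian Path of `T` may be chosen to start and end at leaves. -/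
theorem tree_spanning_walk_can_start_and_end_at_leaves
    {V : Type*} [Fintype V] [DecidableEq V] (G : SimpleGraph V) [DecidableRel G.Adj]
    (hT : G.IsTree) (hn : 2 ≤ Fintype.card V)
    {u v : V} (W : G.Walk u v) (hW : ∀ x : V, x ∈ W.support) :
    ∃ (a b : V) (W' : G.Walk a b),
      G.degree a = 1 ∧ G.degree b = 1 ∧
      (∀ x : V, x ∈ W'.support) ∧
      (Finset.univ.filter fun x : V => 1 < W'.support.count x).card ≤
        (Finset.univ.filter fun x : V => 1 < W.support.count x).card := by
  obtain ⟨a, W1, hdega, hspan1, hc1⟩ := fix_start G hT hn W.length W rfl hW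
  have hspanr : ∀ x : V, x ∈ W1.reverse.support := by
    intro x; rw [SimpleGraph.Walk.support_reverse, List.mem_reverse]; exact hspan1 x
  obtain ⟨b, W2, hdegb, hspan2, hc2⟩ :=
    fix_start G hT hn W1.reverse.length W1.reverse rfl hspanr
  refine ⟨b, a, W2, hdegb, hdega, hspan2, le_trans hc2 (le_trans ?_ hc1)⟩
  apply le_of_eq
  congr 1
  ext x
  simp [SimpleGraph.Walk.support_reverse, List.count_reverse]
end

section
/- Let T be a finite tree and let W be a walk in T from a vertex u to a vertex v that visits every vertex of T. Then every vertex of T of degree at least 3 occurs at least twice in W, and every vertex of T of degree exactly 2 that does not lie on the unique simple path in T from u to v occurs at least twice in W. -/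
open SimpleGraph

/-- Structure of a walk around a vertex `x` that occurs only at the start. -/
private lemma half_walk_struct {V : Type*} {G : SimpleGraph V} :
    ∀ {x w : V} (Q : G.Walk x w), x ∉ Q.support.tail →
    ∃ a : V, (∀ e ∈ Q.edges, x ∈ e → e = s(x, a)) ∧
      (x ≠ w → G.Adj x a ∧ ∃ q : G.Walk a w, x ∉ q.support) := by
  intro x w Q hQ
  cases Q with
  | nil =>
    exact ⟨x, by simp, fun h => absurd rfl h⟩
  | cons h q =>
    refine ⟨_, ?_, fun _ => ⟨h, q, ?_⟩⟩
    · intro e he hxe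
      rw [SimpleGraph.Walk.edges_cons, List.mem_cons] at he
      rcases he with he | he
      · exact he
      · exfalso
        induction e using Sym2.ind with
        | _ s t =>
          rcases Sym2.mem_iff.mp hxe with rfl | rfl
          · exact hQ (by simpa using q.fst_mem_support_of_mem_edges he)
          · exact hQ (by simpa using q.snd_mem_support_of_mem_edges he)
    · simpa using hQ

/-- In a tree, if a walk visits adjacent vertices `x` and `y`, it uses the edge. -/
private lemma edge_mem_of_mem_support {V : Type*} [DecidableEq V] {G : SimpleGraph V}
    (hT : G.IsTree) {u v x y : V} (W : G.Walk u v) (hadj : G.Adj x y)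
    (hx : x ∈ W.support) (hy : y ∈ W.support) : s(x, y) ∈ W.edges := by
  rw [← W.take_spec hx, SimpleGraph.Walk.mem_support_append_iff] at hy
  rcases hy with hy | hy
  · -- walk from y to x inside takeUntil
    set Q := (W.takeUntil x hx).dropUntil y hy with hQdef
    have hbp : Q.bypass.IsPath := Q.bypass_isPath
    have := hT.IsAcyclic.path_unique ⟨Q.bypass, hbp⟩ (SimpleGraph.Path.singleton hadj.symm)
    have hedge : s(y, x) ∈ Q.bypass.edges := by
      have : Q.bypass = (SimpleGraph.Path.singleton hadj.symm : G.Walk y x) :=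
        congrArg Subtype.val this
      rw [this]
      exact SimpleGraph.Path.mk'_mem_edges_singleton hadj.symm
    have h1 : s(y, x) ∈ Q.edges := Q.edges_bypass_subset hedge
    have h2 : s(y, x) ∈ (W.takeUntil x hx).edges :=
      SimpleGraph.Walk.edges_dropUntil_subset _ hy h1
    have h3 : s(y, x) ∈ W.edges := SimpleGraph.Walk.edges_takeUntil_subset W hx h2
    rwa [Sym2.eq_swap] at h3
  · set Q := (W.dropUntil x hx).takeUntil y hy with hQdef
    have hbp : Q.bypass.IsPath := Q.bypass_isPath
    have := hT.IsAcyclic.path_unique ⟨Q.bypass, hbp⟩ (SimpleGraph.Path.singleton hadj)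
    have hedge : s(x, y) ∈ Q.bypass.edges := by
      have : Q.bypass = (SimpleGraph.Path.singleton hadj : G.Walk x y) :=
        congrArg Subtype.val this
      rw [this]
      exact SimpleGraph.Path.mk'_mem_edges_singleton hadj
    have h1 : s(x, y) ∈ Q.edges := Q.edges_bypass_subset hedge
    have h2 : s(x, y) ∈ (W.dropUntil x hx).edges :=
      SimpleGraph.Walk.edges_takeUntil_subset _ hy h1
    exact SimpleGraph.Walk.edges_dropUntil_subset W hx h2

/-- Structure around a vertex occurring exactly once in a walk. -/
private lemma single_visit_struct {V : Type*} [DecidableEq V] {G : SimpleGraph V}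
    {u v x : V} (W : G.Walk u v) (hc : W.support.count x = 1) :
    ∃ a b : V, (∀ e ∈ W.edges, x ∈ e → e = s(x, a) ∨ e = s(x, b)) ∧
      (x ≠ u → G.Adj x b ∧ ∃ q : G.Walk b u, x ∉ q.support) ∧
      (x ≠ v → G.Adj x a ∧ ∃ q : G.Walk a v, x ∉ q.support) := by
  have hx : x ∈ W.support := by
    rw [← List.count_pos_iff, hc]; norm_num
  set W1 := W.takeUntil x hx with hW1
  set W2 := W.dropUntil x hx with hW2
  have hspec : W1.append W2 = W := W.take_spec hx
  have hcnt1 : W1.support.count x = 1 := W.count_support_takeUntil_eq_one hx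
  have hsup : W.support = W1.support ++ W2.support.tail := by
    rw [← hspec, SimpleGraph.Walk.support_append]
  have hcnt2 : W2.support.tail.count x = 0 := by
    have := hc
    rw [hsup, List.count_append, hcnt1] at this
    omega
  have hx2 : x ∉ W2.support.tail := by
    rw [← List.count_pos_iff, hcnt2]; omega
  -- apply the half-walk lemma to W2 and to W1.reverse
  obtain ⟨a, ha1, ha2⟩ := half_walk_struct W2 hx2
  have hxR : x ∉ W1.reverse.support.tail := by
    have hcR : W1.reverse.support.count x = 1 := by
      rw [SimpleGraph.Walk.support_reverse, List.count_reverse]; exact hcnt1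
    have : W1.reverse.support = x :: W1.reverse.support.tail :=
      W1.reverse.support_eq_cons
    rw [this, List.count_cons_self] at hcR
    intro hmem
    have := List.count_pos_iff.mpr hmem
    omega
  obtain ⟨b, hb1, hb2⟩ := half_walk_struct W1.reverse hxR
  refine ⟨a, b, ?_, hb2, ha2⟩
  intro e he hxe
  rw [← hspec, SimpleGraph.Walk.edges_append, List.mem_append] at he
  rcases he with he | he
  · right
    apply hb1
    · rw [SimpleGraph.Walk.edges_reverse, List.mem_reverse]; exact he
    · exact hxe
  · left; exact ha1 e he hxe

/-- Let `T` be a finite tree and `W` a walk from `u` to `v` visiting every vertex.  Then every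
vertex of degree at least 3 occurs at least twice in `W`, and every vertex of degree exactly 2
not lying on the (unique) simple path from `u` to `v` occurs at least twice in `W`. -/
theorem tree_spanning_walk_unbounded_vertices
    {V : Type*} [Fintype V] [DecidableEq V] (G : SimpleGraph V) [DecidableRel G.Adj]
    (hT : G.IsTree) {u v : V} (W : G.Walk u v) (hW : ∀ x : V, x ∈ W.support) :
    (∀ x : V, 3 ≤ G.degree x → 1 < W.support.count x) ∧
    (∀ x : V, G.degree x = 2 →
      (∀ P : G.Path u v, x ∉ (P : G.Walk u v).support) → 1 < W.support.count x) := by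
  -- common fact: if x occurs once, all its neighbors lie in a 2-element set
  have key : ∀ x : V, W.support.count x = 1 →
      ∃ a b : V, (∀ y : V, G.Adj x y → y = a ∨ y = b) ∧
        (x ≠ u → G.Adj x b ∧ ∃ q : G.Walk b u, x ∉ q.support) ∧
        (x ≠ v → G.Adj x a ∧ ∃ q : G.Walk a v, x ∉ q.support) := by
    intro x hc
    obtain ⟨a, b, hab, h2, h3⟩ := single_visit_struct W hc
    refine ⟨a, b, ?_, h2, h3⟩
    intro y hadj
    have he : s(x, y) ∈ W.edges := edge_mem_of_mem_support hT W hadj (hW x) (hW y)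
    rcases hab _ he (Sym2.mem_mk_left x y) with h | h
    · left; exact (Sym2.congr_right.mp h)
    · right; exact (Sym2.congr_right.mp h)
  have hcpos : ∀ x : V, 0 < W.support.count x :=
    fun x => List.count_pos_iff.mpr (hW x)
  have hsub : ∀ x a b : V, (∀ y : V, G.Adj x y → y = a ∨ y = b) → G.degree x ≤ 2 := by
    intro x a b h
    have : G.neighborFinset x ⊆ {a, b} := by
      intro y hy
      rw [SimpleGraph.mem_neighborFinset] at hy
      rcases h y hy with rfl | rfl <;> simp
    calc G.degree x = (G.neighborFinset x).card := rfl
      _ ≤ ({a, b} : Finset V).card := Finset.card_le_card this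
      _ ≤ 2 := Finset.card_insert_le a {b} |>.trans (by simp)
  constructor
  · intro x hdeg
    by_contra hlt
    have hc : W.support.count x = 1 := by have := hcpos x; omega
    obtain ⟨a, b, hnb, -, -⟩ := key x hc
    have := hsub x a b hnb
    omega
  · intro x hdeg hP
    -- x is not u or v
    obtain ⟨p0, hp0, -⟩ := hT.existsUnique_path u v
    have hxp0 : x ∉ p0.support := hP ⟨p0, hp0⟩
    have hxu : x ≠ u := fun h => hxp0 (h ▸ p0.start_mem_support)
    have hxv : x ≠ v := fun h => hxp0 (h ▸ p0.end_mem_support)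
    by_contra hlt
    have hc : W.support.count x = 1 := by have := hcpos x; omega
    obtain ⟨a, b, hnb, h2, h3⟩ := key x hc
    obtain ⟨hadjb, qb, hqb⟩ := h2 hxu
    obtain ⟨hadja, qa, hqa⟩ := h3 hxv
    -- a ≠ b since x has two distinct neighbors
    have hab : a ≠ b := by
      rintro rfl
      have : G.neighborFinset x ⊆ {a} := by
        intro y hy
        rw [SimpleGraph.mem_neighborFinset] at hy
        rcases hnb y hy with rfl | rfl <;> simp
      have := Finset.card_le_card this
      rw [SimpleGraph.card_neighborFinset_eq_degree, hdeg] at this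
      simp at this
    -- build a walk from b to a avoiding x
    have hadjbx : G.Adj b x := hadjb.symm
    set Q : G.Walk b a := qb.append (p0.append qa.reverse) with hQ
    have hxQ : x ∉ Q.support := by
      rw [hQ, SimpleGraph.Walk.mem_support_append_iff,
        SimpleGraph.Walk.mem_support_append_iff, SimpleGraph.Walk.support_reverse,
        List.mem_reverse]
      push_neg
      exact ⟨hqb, hxp0, hqa⟩
    -- but the unique path from b to a passes through x
    set P2 : G.Walk b a := SimpleGraph.Walk.cons hadjbx
      (SimpleGraph.Walk.cons hadja SimpleGraph.Walk.nil) with hP2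
    have hP2path : P2.IsPath := by
      rw [hP2, SimpleGraph.Walk.isPath_def]
      simp [SimpleGraph.Walk.support_cons]
      refine ⟨⟨hadjbx.ne, fun h => hab h.symm⟩, hadja.ne⟩
    have huniq := hT.IsAcyclic.path_unique ⟨Q.bypass, Q.bypass_isPath⟩ ⟨P2, hP2path⟩
    have hxP2 : x ∈ P2.support := by
      rw [hP2]; simp [SimpleGraph.Walk.support_cons]
    have : x ∈ Q.bypass.support := by
      have : Q.bypass = P2 := congrArg Subtype.val huniq
      rw [this]; exact hxP2
    exact hxQ (Q.support_bypass_subset this)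
end

section
/- Let G be a finite simple graph with N vertices and let W be a walk in G that visits every vertex of G and whose start and end vertices are adjacent in G. Then there exists a walk W' in G that visits every vertex of G, whose start and end vertices are adjacent in G, such that every vertex that is unbounded in W' is unbounded in W, and every vertex occurs at most N times in the vertex sequence of W'. -/
/-!
Shorten the given walk by cutting out closed subwalks as long as this loses no vertex; this
only lowers multiplicities. In the resulting walk every closed subwalk contains a vertex
visited nowhere else. If `x` occurs `k` times, the `k - 1` closed subwalks between consecutive
visits of `x` therefore carry `k - 1` distinct vertices other than `x`, so `k ≤ N`.
-/

open SimpleGraph Finset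

namespace SimpleGraph.Walk

variable {V : Type*} {G : SimpleGraph V} {a b x : V}

def IsLoopReduced (W : G.Walk a b) : Prop :=
  ∀ (x : V) (p : G.Walk a x) (c : G.Walk x x) (q : G.Walk x b),
    p.append (c.append q) = W → ¬c.Nil → ∃ v ∈ c.support, v ∉ p.support ∧ v ∉ q.support

theorem support_append_sublist_support_append_append (p : G.Walk a x) (c : G.Walk x x)
    (q : G.Walk x b) : (p.append q).support.Sublist (p.append (c.append q)).support := by
  rw [support_append, support_append, tail_support_append]
  exact (List.sublist_append_right _ _).append_left _

theorem exists_isLoopReduced_support_sublist (W : G.Walk a b) :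
    ∃ W' : G.Walk a b, W'.IsLoopReduced ∧ W.support ⊆ W'.support ∧
      W'.support.Sublist W.support := by
  induction hn : W.length using Nat.strong_induction_on generalizing W with
  | _ n ih =>
  by_cases hW : W.IsLoopReduced
  · exact ⟨W, hW, List.Subset.refl _, List.Sublist.refl _⟩
  obtain ⟨x, p, c, q, rfl, hc, hcov⟩ : ∃ (x : V) (p : G.Walk a x) (c : G.Walk x x)
      (q : G.Walk x b), p.append (c.append q) = W ∧ ¬c.Nil ∧
        ∀ v ∈ c.support, v ∈ p.support ∨ v ∈ q.support := by
    simpa [IsLoopReduced, or_iff_not_imp_left] using hW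
  have hlen : (p.append q).length < n := by
    rw [← hn, length_append, length_append, length_append]
    have := not_nil_iff_lt_length.mp hc
    omega
  obtain ⟨W', hW', hsub, hsl⟩ := ih _ hlen (p.append q) rfl
  refine ⟨W', hW', fun v hv => hsub ?_,
    hsl.trans (support_append_sublist_support_append_append p c q)⟩
  simp only [mem_support_append_iff] at hv ⊢
  rcases hv with hv | hv | hv
  · exact .inl hv
  · exact hcov v hv
  · exact .inr hv

variable [DecidableEq V]

theorem count_support_start (R : G.Walk x b) :
    R.support.count x = R.support.tail.count x + 1 := by
  rw [← R.cons_tail_support, List.count_cons_self, List.tail_cons]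

theorem exists_eq_append_of_mem_support {y : V} (R : G.Walk y b) (hx : x ∈ R.support) :
    ∃ (t : G.Walk y x) (q : G.Walk x b), R = t.append q ∧ t.support.count x = 1 ∧
      q.length ≤ R.length :=
  ⟨_, _, (R.take_spec hx).symm, R.count_support_takeUntil_eq_one hx,
    R.length_dropUntil_le_length hx⟩

theorem count_support_append_of_count_eq_one {y : V} {t : G.Walk y x} (q : G.Walk x b)
    (ht : t.support.count x = 1) : (t.append q).support.count x = q.support.count x := by
  rw [support_append, List.count_append, ht, count_support_start q, add_comm]

theorem IsLoopReduced.count_support_le_card_sdiff_add_one {W : G.Walk a b}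
    (hW : W.IsLoopReduced) (p : G.Walk a x) (R : G.Walk x b) (hpR : p.append R = W) :
    R.support.count x ≤ #(R.support.toFinset \ p.support.toFinset) + 1 := by
  induction hn : R.length using Nat.strong_induction_on generalizing p R with
  | _ n ih =>
  cases R with
  | nil => simp
  | cons h R₁ =>
  by_cases hx : x ∈ R₁.support
  swap
  · simp [List.count_eq_zero_of_not_mem hx]
  -- `cons h t` is the closed subwalk up to the first return to `x`.
  obtain ⟨t, q, rfl, ht, hqR₁⟩ := R₁.exists_eq_append_of_mem_support hx
  obtain ⟨v, hvc, hvp, hvq⟩ := hW x p (cons h t) q (by rwa [cons_append]) not_nil_cons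
  have hcount : (cons h (t.append q)).support.count x = q.support.count x + 1 := by
    rw [support_cons, List.count_cons_self, count_support_append_of_count_eq_one q ht]
  have hqlen : q.length < n := by
    rw [← hn, length_cons]
    omega
  have hq := ih _ hqlen (p.append (cons h t)) q (by rw [← append_assoc, cons_append, hpR]) rfl
  have hcard : #(q.support.toFinset \ (p.append (cons h t)).support.toFinset) <
      #((cons h (t.append q)).support.toFinset \ p.support.toFinset) := by
    apply card_lt_card
    rw [← cons_append, ssubset_iff_of_subset]
    · have hvcq : v ∈ ((cons h t).append q).support :=
        (mem_support_append_iff _ _).mpr (.inl hvc)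
      exact ⟨v, mem_sdiff.mpr ⟨List.mem_toFinset.mpr hvcq, by simpa using hvp⟩, by simp [hvq]⟩
    · intro w
      simp only [mem_sdiff, List.mem_toFinset, mem_support_append_iff]
      tauto
  omega

theorem IsLoopReduced.count_support_le_card [Fintype V] {W : G.Walk a b}
    (hW : W.IsLoopReduced) (x : V) : W.support.count x ≤ Fintype.card V := by
  by_cases hx : x ∈ W.support
  swap
  · simp [List.count_eq_zero_of_not_mem hx]
  obtain ⟨p, R, rfl, hp, -⟩ := W.exists_eq_append_of_mem_support hx
  have hcard : #(R.support.toFinset \ p.support.toFinset) < Fintype.card V :=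
    card_lt_univ_of_notMem (x := x) (by simp)
  have := hW.count_support_le_card_sdiff_add_one p R rfl
  rw [count_support_append_of_count_eq_one R hp]
  omega

end SimpleGraph.Walk

/-- Let `G` be a finite simple graph with `N` vertices and `W` a walk visiting every vertex
with adjacent start and end vertices.  Then there is a walk `W'` visiting every vertex with
adjacent start and end vertices such that every vertex unbounded in `W'` is unbounded in `W`
and every vertex occurs at most `N` times in `W'`. -/
theorem exists_unbounded_hamiltonian_cycle_with_bounded_multiplicity
    {V : Type*} [Fintype V] [DecidableEq V] (G : SimpleGraph V)
    {a b : V} (hab : G.Adj a b) (W : G.Walk a b) (hW : ∀ x : V, x ∈ W.support) :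
    ∃ (a' b' : V) (_ : G.Adj a' b') (W' : G.Walk a' b'),
      (∀ x : V, x ∈ W'.support) ∧
      (∀ x : V, 1 < W'.support.count x → 1 < W.support.count x) ∧
      (∀ x : V, W'.support.count x ≤ Fintype.card V) := by
  obtain ⟨W', hW', hcov, hsub⟩ := W.exists_isLoopReduced_support_sublist
  exact ⟨a, b, hab, W', fun x => hcov (hW x), fun x hx => hx.trans_le (hsub.count_le x),
    hW'.count_support_le_card⟩
end

section
/- Let G be a finite simple graph, let W = (v_0, v_1, …, v_k) be a walk in G, and suppose G has an edge between v_i and v_k for some index 0 ≤ i ≤ k − 2. Then the sequence (v_0, v_1, …, v_i, v_k, v_{k−1}, …, v_{i+1}) is also a walk in G, and it has the same multiset of vertices as W; in particular it has exactly the same unbounded vertices and the same number of unbounded vertices as W. -/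
namespace List

variable {α : Type*} {R : α → α → Prop}

theorem IsChain.append_reverse [Std.Symm R] {l₁ l₂ : List α} {a b : α}
    (h : (l₁ ++ l₂).IsChain R) (ha : l₁.getLast? = some a) (hb : l₂.getLast? = some b)
    (hab : R a b) : (l₁ ++ l₂.reverse).IsChain R := by
  obtain ⟨h₁, h₂, -⟩ := isChain_append.1 h
  refine h₁.append (isChain_reverse.2 (h₂.imp fun _ _ hxy => Std.Symm.symm _ _ hxy)) ?_
  rintro x hx y hy
  rw [ha, Option.mem_some_iff] at hx
  rw [head?_reverse, hb, Option.mem_some_iff] at hy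
  exact hx ▸ hy ▸ hab

end List

theorem posa_rotation_general
    {V : Type*} [DecidableEq V] (G : SimpleGraph V)
    (l₁ l₂ : List V) (vi vk : V)
    (hvi : l₁.getLast? = some vi) (hvk : l₂.getLast? = some vk)
    (hchain : (l₁ ++ l₂).Chain' G.Adj)
    (hadj : G.Adj vi vk) :
    (l₁ ++ l₂.reverse).Chain' G.Adj ∧
    (↑(l₁ ++ l₂.reverse) : Multiset V) = (↑(l₁ ++ l₂) : Multiset V) ∧
    (∀ x : V, (l₁ ++ l₂.reverse).count x = (l₁ ++ l₂).count x) ∧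
    (∀ x : V, 1 < (l₁ ++ l₂.reverse).count x ↔ 1 < (l₁ ++ l₂).count x) := by
  have : Std.Symm G.Adj := G.symm
  have hperm : (l₁ ++ l₂.reverse).Perm (l₁ ++ l₂) := (List.reverse_perm l₂).append_left l₁
  exact ⟨List.IsChain.append_reverse hchain hvi hvk hadj, Multiset.coe_eq_coe.2 hperm,
    hperm.count_eq, fun x => by rw [hperm.count_eq]⟩

/-- Pósa rotation.  Decompose a walk `W = (v_0, …, v_k)` (a list whose consecutive entries are
adjacent) as `l₁ ++ l₂` with `l₁ = (v_0, …, v_i)` and `l₂ = (v_{i+1}, …, v_k)`; the condition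
`i ≤ k - 2` means `l₂` has at least two entries.  If `G` has an edge between `v_i` and `v_k`,
then the rotated sequence `(v_0, …, v_i, v_k, v_{k-1}, …, v_{i+1}) = l₁ ++ l₂.reverse` is also
a walk in `G` with the same multiset of vertices; in particular it has exactly the same
unbounded vertices (vertices occurring more than once) as `W`. -/
theorem posa_rotation
    {V : Type*} [DecidableEq V] (G : SimpleGraph V)
    (l₁ l₂ : List V) (vi vk : V)
    (hvi : l₁.getLast? = some vi) (hvk : l₂.getLast? = some vk)
    (hlen : 2 ≤ l₂.length)
    (hchain : (l₁ ++ l₂).Chain' G.Adj)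
    (hadj : G.Adj vi vk) :
    (l₁ ++ l₂.reverse).Chain' G.Adj ∧
    (↑(l₁ ++ l₂.reverse) : Multiset V) = (↑(l₁ ++ l₂) : Multiset V) ∧
    (∀ x : V, (l₁ ++ l₂.reverse).count x = (l₁ ++ l₂).count x) ∧
    (∀ x : V, 1 < (l₁ ++ l₂.reverse).count x ↔ 1 < (l₁ ++ l₂).count x) :=
  posa_rotation_general G l₁ l₂ vi vk hvi hvk hchain hadj
end

section
/- Let G be a finite connected simple graph, let W = (v_0, v_1, …, v_k) be a walk in G whose start vertex v_0 and end vertex v_k are adjacent in G, and suppose some vertex of G is not visited by W. Then there exists a vertex x of G not visited by W and a walk W' in G whose multiset of vertices is exactly the multiset of vertices of W together with one occurrence of x; in particular, every vertex of W occurs in W' exactly as many times as in W, x occurs exactly once in W', and the length of W' exceeds the length of W by one. -/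
/-!
A walk `W` from `a` to `b` with `a ~ b` closes up to a closed walk `C`, and connectivity gives an
edge `vx` with `v` on `W` and `x` off it. Rotating `C` to start at `v` and dropping its first
edge yields a walk ending at `v` that visits every vertex with the multiplicity it has in `W`;
appending the edge `vx` gives the required walk.
-/

open scoped List

namespace SimpleGraph

variable {V : Type*} {G : SimpleGraph V}

lemma Preconnected.exists_adj_mem_not_mem (hG : G.Preconnected) {s : Set V} {u y : V}
    (hu : u ∈ s) (hy : y ∉ s) : ∃ v x, v ∈ s ∧ x ∉ s ∧ G.Adj v x := by
  obtain ⟨p⟩ := hG u y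
  obtain ⟨d, -, hd, hd'⟩ := p.exists_boundary_dart s hu hy
  exact ⟨d.fst, d.snd, hd, hd', d.adj⟩

namespace Walk

lemma exists_walk_to_support_perm_support_tail [DecidableEq V] {u v : V} (c : G.Walk u u)
    (hc : ¬c.Nil) (hv : v ∈ c.support) :
    ∃ (w : V) (p : G.Walk w v), p.support ~ c.support.tail := by
  refine ⟨_, (c.rotate v hv).tail, ?_⟩
  rw [support_tail_of_not_nil _ (by simpa using hc)]
  exact (c.support_rotate v hv).perm

lemma support_tail_concat_perm_support {u v : V} (p : G.Walk u v) (h : G.Adj v u) :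
    (p.concat h).support.tail ~ p.support := by
  simpa [support_concat] using (p.concat h).tail_support_perm_dropLast_support

end Walk

end SimpleGraph

open SimpleGraph

theorem cycle_extension_general
    {V : Type*} [DecidableEq V] (G : SimpleGraph V) (hG : G.Connected)
    {a b : V} (hab : G.Adj a b) (W : G.Walk a b)
    (hmiss : ∃ y : V, y ∉ W.support) :
    ∃ x : V, x ∉ W.support ∧
      ∃ (a' b' : V) (W' : G.Walk a' b'),
        (↑W'.support : Multiset V) = x ::ₘ (↑W.support : Multiset V) ∧
        (∀ v ∈ W.support, W'.support.count v = W.support.count v) ∧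
        W'.support.count x = 1 ∧
        W'.length = W.length + 1 := by
  obtain ⟨y, hy⟩ := hmiss
  obtain ⟨v, x, hv, hx, hvx⟩ : ∃ v x, v ∈ W.support ∧ x ∉ W.support ∧ G.Adj v x :=
    hG.preconnected.exists_adj_mem_not_mem (s := {z | z ∈ W.support}) W.start_mem_support hy
  let C := W.concat hab.symm
  obtain ⟨u, p, hp⟩ := C.exists_walk_to_support_perm_support_tail (v := v)
    (by simp [C, ← Walk.length_eq_zero_iff]) (by simp [C, Walk.support_concat, hv])
  have hperm : (p.concat hvx).support ~ x :: W.support := by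
    rw [Walk.support_concat]
    exact (List.perm_append_singleton x _).trans
      ((hp.trans (W.support_tail_concat_perm_support hab.symm)).cons x)
  refine ⟨x, hx, u, x, p.concat hvx, Multiset.coe_eq_coe.mpr hperm, fun z hz => ?_, ?_, ?_⟩
  · have hzx : z ≠ x := by rintro rfl; exact hx hz
    rw [hperm.count_eq, List.count_cons_of_ne hzx.symm]
  · rw [hperm.count_eq, List.count_cons_self, List.count_eq_zero_of_not_mem hx]
  · simpa [Walk.length_support] using hperm.length_eq

/-- Cycle extension.  Let `G` be a finite connected simple graph and `W` a walk whose start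
and end vertices are adjacent, and suppose some vertex of `G` is not visited by `W`.  Then
there is an unvisited vertex `x` and a walk `W'` whose multiset of vertices is exactly the
multiset of vertices of `W` together with one occurrence of `x`; in particular every vertex of
`W` occurs in `W'` exactly as often as in `W`, `x` occurs exactly once in `W'`, and the length
of `W'` exceeds that of `W` by one. -/
theorem cycle_extension
    {V : Type*} [Fintype V] [DecidableEq V] (G : SimpleGraph V) (hG : G.Connected)
    {a b : V} (hab : G.Adj a b) (W : G.Walk a b)
    (hmiss : ∃ y : V, y ∉ W.support) :
    ∃ x : V, x ∉ W.support ∧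
      ∃ (a' b' : V) (W' : G.Walk a' b'),
        (↑W'.support : Multiset V) = x ::ₘ (↑W.support : Multiset V) ∧
        (∀ v ∈ W.support, W'.support.count v = W.support.count v) ∧
        W'.support.count x = 1 ∧
        W'.length = W.length + 1 :=
  cycle_extension_general G hG hab W hmiss
end

section
/- Let G be a finite connected simple graph with N ≥ 3 vertices and let U be a subset of the vertices of G. Define a simple graph G' as follows: the vertices of G' are the vertices of G not in U, together with N copies (u,1), …, (u,N) of each vertex u in U; the edges of G' are: (i) for each u in U, the cycle edges (u,i)(u,i+1) for 1 ≤ i < N together with (u,N)(u,1); (ii) for each edge xy of G with x, y not in U, the edge xy; (iii) for each edge uy of G with u in U and y not in U, the edges (u,i)y for all 1 ≤ i ≤ N; and (iv) for each edge uw of G with u, w both in U, the edges (u,i)(w,j) for all 1 ≤ i, j ≤ N. Then G has a walk visiting every vertex of G, with adjacent start and end vertices, in which every vertex not in U occurs exactly once, if and only if G' has a Hamiltonian cycle. -/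
open SimpleGraph

/-- The base relation of the HCP construction `G'` built from a graph `G`, a set `U` of
(unbounded) vertices and a parameter `N`.  Vertices are the vertices of `G` outside `U`
(`Sum.inl`) together with `N` copies of each vertex of `U` (`Sum.inr`).  Edges: (i) for each
`u ∈ U`, the cycle edges `(u,i)(u,i+1 mod N)`; (ii) for each edge `xy` of `G` with
`x, y ∉ U`, the edge `xy`; (iii) for each edge `uy` of `G` with `u ∈ U`, `y ∉ U`, the edges
`(u,i)y` for all `i`; (iv) for each edge `uw` of `G` with `u, w ∈ U`, the edges `(u,i)(w,j)`
for all `i, j`. -/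
def hcpRel {V : Type*} (G : SimpleGraph V) (U : Set V) (N : ℕ) :
    ((↥Uᶜ) ⊕ (↥U × Fin N)) → ((↥Uᶜ) ⊕ (↥U × Fin N)) → Prop
  | Sum.inl x, Sum.inl y => G.Adj x.1 y.1
  | Sum.inl x, Sum.inr p => G.Adj x.1 p.1.1
  | Sum.inr p, Sum.inl y => G.Adj p.1.1 y.1
  | Sum.inr p, Sum.inr q =>
      (p.1 = q.1 ∧ (q.2 : ℕ) = ((p.2 : ℕ) + 1) % N) ∨ G.Adj p.1.1 q.1.1

/-- The HCP construction `G'`. -/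
def hcpGraph {V : Type*} (G : SimpleGraph V) (U : Set V) (N : ℕ) :
    SimpleGraph ((↥Uᶜ) ⊕ (↥U × Fin N)) :=
  SimpleGraph.fromRel (hcpRel G U N)

/-!
A closed subwalk at `u` whose vertices all occur elsewhere in the walk can be cut out. In a walk
where no such cut is possible, each return to `u` is paid for by a vertex seen only between two
consecutive visits of `u`, so `u` occurs at most `|V|` times. Such a walk lifts to a Hamiltonian
path of `G'`: a visit of `u ∈ U` followed by `k` further visits goes to the copy `(u, e + k)`, and
the last visit runs down the copies `(u, e), …, (u, 0)`, where `e + (number of visits of u) = |V|`.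
The edge `ab` closes this path into a Hamiltonian cycle.

Conversely, projecting a Hamiltonian cycle of `G'` to `G`, with the steps between copies of one
vertex dropped, gives a closed walk through every vertex in which each vertex outside `U` occurs
once after the base point; removing its first edge gives the required walk.
-/

namespace SimpleGraph.Walk

variable {V : Type*} {G : SimpleGraph V}

def IsIrreducibleOutside (A : Finset V) {a b : V} (t : G.Walk a b) : Prop :=
  ∀ t' : G.Walk a b, t'.length < t.length → t'.support.Sublist t.support →
    ∃ w ∈ t.support, w ∉ A ∧ w ∉ t'.support

lemma IsIrreducibleOutside.exists_mem_notMem {A : Finset V} {u b : V} {t₁ : G.Walk u u}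
    {t₂ : G.Walk u b} (ht : (t₁.append t₂).IsIrreducibleOutside A) (h₁ : ¬t₁.Nil) :
    ∃ v ∈ t₁.support, v ∉ A ∧ v ∉ t₂.support := by
  have hlen : t₂.length < (t₁.append t₂).length := by
    rw [length_append]
    have := not_nil_iff_lt_length.mp h₁
    omega
  have hsub : t₂.support.Sublist (t₁.append t₂).support := by
    rw [support_append, ← t₂.cons_tail_support]
    exact (List.singleton_sublist.mpr t₁.end_mem_support).append_right _
  obtain ⟨v, hv, hvA, hv₂⟩ := ht t₂ hlen hsub
  exact ⟨v, (mem_support_append_iff _ _).mp hv |>.resolve_right hv₂, hvA, hv₂⟩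

variable [DecidableEq V]

lemma count_support_dropUntil_self {a b u : V} (p : G.Walk a b) (hu : u ∈ p.support) :
    (p.dropUntil u hu).support.count u = p.support.count u := by
  conv_rhs => rw [← p.take_spec hu, support_append, List.count_append,
    p.count_support_takeUntil_eq_one hu]
  have h := congrArg (List.count u) (p.dropUntil u hu).cons_tail_support
  rw [List.count_cons_self] at h
  omega

lemma exists_eq_append_of_mem_support_tail {u b : V} (t : G.Walk u b)
    (hu : u ∈ t.support.tail) : ∃ (t₁ : G.Walk u u) (t₂ : G.Walk u b),
      t = t₁.append t₂ ∧ ¬t₁.Nil ∧ t.support.count u = t₂.support.count u + 1 := by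
  cases t with
  | nil => simp at hu
  | cons e r =>
    have hu : u ∈ r.support := hu
    refine ⟨cons e (r.takeUntil u hu), r.dropUntil u hu, ?_, not_nil_cons, ?_⟩
    · rw [cons_append, r.take_spec hu]
    · rw [support_cons, List.count_cons_self, count_support_dropUntil_self]

namespace IsIrreducibleOutside

lemma append_right {A : Finset V} {a u b : V} {t₁ : G.Walk a u} {t₂ : G.Walk u b}
    (ht : (t₁.append t₂).IsIrreducibleOutside A) :
    t₂.IsIrreducibleOutside (A ∪ t₁.support.toFinset) := fun t₂' hlen hsub => by
  obtain ⟨w, hw, hwA, hw'⟩ := ht (t₁.append t₂') (by simp only [length_append]; omega)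
    (by simpa only [support_append] using hsub.tail.append_left _)
  rw [mem_support_append_iff, not_or] at hw'
  exact ⟨w, (mem_support_append_iff _ _).mp hw |>.resolve_left hw'.1, by simp [hwA, hw'.1],
    hw'.2⟩

/-- Each return of `t` to its start costs a vertex outside `A` that is seen only before that
return. -/
lemma count_start_le {A : Finset V} {u b : V} {t : G.Walk u b} (ht : t.IsIrreducibleOutside A)
    (hu : u ∈ A) :
    t.support.count u ≤ (t.support.toFinset \ A).card + 1 := by
  by_cases hut : u ∈ t.support.tail
  swap
  · rw [← t.cons_tail_support, List.count_cons_self, List.count_eq_zero.mpr hut]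
    omega
  obtain ⟨t₁, t₂, heq, h₁, hcount⟩ := t.exists_eq_append_of_mem_support_tail hut
  have hlen : t₂.length < t.length := by
    rw [heq, length_append]
    have := not_nil_iff_lt_length.mp h₁
    omega
  rw [heq] at ht hcount ⊢
  obtain ⟨v, hv₁, hvA, hv₂⟩ := ht.exists_mem_notMem h₁
  have ih := count_start_le (A := A ∪ t₁.support.toFinset) ht.append_right
    (Finset.mem_union_left _ hu)
  have hsub : insert v (t₂.support.toFinset \ (A ∪ t₁.support.toFinset)) ⊆
      (t₁.append t₂).support.toFinset \ A := by
    intro w hw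
    simp only [Finset.mem_insert, Finset.mem_sdiff, Finset.mem_union, List.mem_toFinset,
      mem_support_append_iff] at hw ⊢
    rcases hw with rfl | ⟨hw₂, hwA⟩
    · exact ⟨.inl hv₁, hvA⟩
    · exact ⟨.inr hw₂, fun h => hwA (.inl h)⟩
  have hcard := Finset.card_le_card hsub
  rw [Finset.card_insert_of_notMem (by simp [hv₁])] at hcard
  omega
termination_by t.length
decreasing_by exact hlen

end IsIrreducibleOutside

theorem exists_support_sublist_forall_count_le [Fintype V] {a b : V} (p : G.Walk a b) :
    ∃ q : G.Walk a b, q.support.Sublist p.support ∧ (∀ x ∈ p.support, x ∈ q.support) ∧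
      ∀ u, q.support.count u ≤ Fintype.card V := by
  classical
  have hex : ∃ n, ∃ q : G.Walk a b, q.length = n ∧ q.support.Sublist p.support ∧
      ∀ x ∈ p.support, x ∈ q.support := ⟨_, p, rfl, List.Sublist.refl _, fun _ hx => hx⟩
  obtain ⟨q, hqlen, hqsub, hqcov⟩ := Nat.find_spec hex
  have hq : q.IsIrreducibleOutside ∅ := fun q' hlen hsub => by
    obtain ⟨x, hxp, hx⟩ : ∃ x ∈ p.support, x ∉ q'.support := by
      by_contra! h
      exact Nat.find_min hex (hqlen ▸ hlen) ⟨_, rfl, hsub.trans hqsub, h⟩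
    exact ⟨x, hqcov x hxp, Finset.notMem_empty x, hx⟩
  refine ⟨q, hqsub, hqcov, fun u => ?_⟩
  by_cases hu : u ∈ q.support
  swap
  · simp [List.count_eq_zero.mpr hu]
  have ht : (q.dropUntil u hu).IsIrreducibleOutside (q.takeUntil u hu).support.toFinset := by
    have hq' : ((q.takeUntil u hu).append (q.dropUntil u hu)).IsIrreducibleOutside ∅ := by
      rwa [q.take_spec hu]
    simpa using hq'.append_right
  have hcard := Finset.card_lt_univ_of_notMem (x := u)
    (s := (q.dropUntil u hu).support.toFinset \ (q.takeUntil u hu).support.toFinset)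
    (by simp [end_mem_support])
  have := ht.count_start_le (by simp)
  rw [count_support_dropUntil_self] at this
  omega

lemma IsHamiltonian.isHamiltonianCycle_cons [Fintype V] {a b : V} {p : G.Walk a b}
    (hp : p.IsHamiltonian) (h : G.Adj b a) (hcard : 3 ≤ Fintype.card V) :
    (cons h p).IsHamiltonianCycle := by
  refine isHamiltonianCycle_isCycle_and_isHamiltonian_tail.mpr
    ⟨(cons_isCycle_iff p h).mpr ⟨hp.isPath, fun he => ?_⟩,
      fun x => by simpa [tail_cons] using hp x⟩
  have := hp.isPath.length_eq_one_of_mem_edges (Sym2.eq_swap ▸ he)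
  have := hp.length_eq
  omega

end SimpleGraph.Walk

namespace hcpGraph

variable {V : Type*} {G : SimpleGraph V} {U : Set V} {N : ℕ}

def proj : ↥Uᶜ ⊕ ↥U × Fin N → V := Sum.elim Subtype.val fun p => p.1.1

def copyIndex : ↥Uᶜ ⊕ ↥U × Fin N → ℕ := Sum.elim (fun _ => 0) fun p => p.2

@[simp] lemma proj_inl (z : ↥Uᶜ) : proj (N := N) (.inl z) = z.1 := rfl
@[simp] lemma proj_inr (p : ↥U × Fin N) : proj (.inr p) = p.1.1 := rfl
@[simp] lemma copyIndex_inl (z : ↥Uᶜ) : copyIndex (N := N) (.inl z) = 0 := rfl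
@[simp] lemma copyIndex_inr (p : ↥U × Fin N) : copyIndex (.inr p) = p.2 := rfl

lemma eq_inl_iff_proj_eq (w : ↥Uᶜ ⊕ ↥U × Fin N) (z : ↥Uᶜ) : w = .inl z ↔ proj w = z.1 := by
  rcases w with w | ⟨u, i⟩
  · simp [Subtype.ext_iff]
  · simp only [proj_inr, reduceCtorEq, false_iff]
    exact fun h => z.2 (h ▸ u.2)

lemma copyIndex_eq_zero {w : ↥Uᶜ ⊕ ↥U × Fin N} (hw : proj w ∉ U) : copyIndex w = 0 := by
  rcases w with _ | ⟨u, _⟩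
  · rfl
  · exact absurd u.2 hw

lemma eq_iff_proj_eq_and_copyIndex_eq {w w' : ↥Uᶜ ⊕ ↥U × Fin N} :
    w = w' ↔ proj w = proj w' ∧ copyIndex w = copyIndex w' := by
  refine ⟨fun h => h ▸ ⟨rfl, rfl⟩, fun ⟨h, h'⟩ => ?_⟩
  rcases w' with z | ⟨u, i⟩
  · exact (eq_inl_iff_proj_eq w z).mpr h
  · rcases w with z | ⟨u', i'⟩
    · simp only [proj_inl, proj_inr] at h
      exact absurd (h ▸ u.2) z.2
    · simp_all [Prod.ext_iff, Subtype.ext_iff, Fin.ext_iff]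

lemma copyIndex_lt [NeZero N] (w : ↥Uᶜ ⊕ ↥U × Fin N) : copyIndex w < N := by
  rcases w with _ | ⟨_, i⟩
  · exact Nat.pos_of_neZero N
  · exact i.2

lemma proj_surjective [NeZero N] : Function.Surjective (proj (U := U) (N := N)) := fun x => by
  by_cases hx : x ∈ U
  · exact ⟨.inr (⟨x, hx⟩, 0), rfl⟩
  · exact ⟨.inl ⟨x, hx⟩, rfl⟩

lemma proj_eq_or_adj_of_hcpRel {w w' : ↥Uᶜ ⊕ ↥U × Fin N} (h : hcpRel G U N w w') :
    proj w = proj w' ∨ G.Adj (proj w) (proj w') := by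
  rcases w with z | ⟨u, i⟩ <;> rcases w' with z' | ⟨u', i'⟩ <;> simp only [hcpRel] at h
  · exact .inr h
  · exact .inr h
  · exact .inr h
  · exact h.imp (congrArg Subtype.val ·.1) id

lemma proj_eq_or_adj_of_adj {w w' : ↥Uᶜ ⊕ ↥U × Fin N} (h : (hcpGraph G U N).Adj w w') :
    proj w = proj w' ∨ G.Adj (proj w) (proj w') := by
  obtain ⟨-, h | h⟩ := (fromRel_adj _ _ _).mp h
  · exact proj_eq_or_adj_of_hcpRel h
  · exact (proj_eq_or_adj_of_hcpRel h).imp Eq.symm Adj.symm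

lemma adj_of_adj_proj {w w' : ↥Uᶜ ⊕ ↥U × Fin N} (h : G.Adj (proj w) (proj w')) :
    (hcpGraph G U N).Adj w w' := by
  refine (fromRel_adj _ _ _).mpr ⟨fun hw => G.ne_of_adj h (congrArg proj hw), .inl ?_⟩
  rcases w with z | ⟨u, i⟩ <;> rcases w' with z' | ⟨u', i'⟩ <;> first | exact h | exact .inr h

lemma adj_inr_succ (u : ↥U) {i : ℕ} (hi : i + 1 < N) :
    (hcpGraph G U N).Adj (.inr (u, ⟨i, by omega⟩)) (.inr (u, ⟨i + 1, hi⟩)) :=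
  (fromRel_adj _ _ _).mpr
    ⟨by simp [Fin.ext_iff], .inl (.inl ⟨rfl, (Nat.mod_eq_of_lt hi).symm⟩)⟩

section Projection

variable [DecidableEq V]

def projWalk : {w w' : ↥Uᶜ ⊕ ↥U × Fin N} → (hcpGraph G U N).Walk w w' →
    G.Walk (proj w) (proj w')
  | _, _, .nil => .nil
  | w, _, .cons (v := m) h q =>
    if he : proj w = proj m then (projWalk q).copy he.symm rfl
    else .cons ((proj_eq_or_adj_of_adj h).resolve_left he) (projWalk q)

lemma proj_mem_support_projWalk {w w' : ↥Uᶜ ⊕ ↥U × Fin N} (p : (hcpGraph G U N).Walk w w')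
    {x : ↥Uᶜ ⊕ ↥U × Fin N} (hx : x ∈ p.support) : proj x ∈ (projWalk p).support := by
  induction p with
  | nil => simp_all [projWalk]
  | @cons w m _ h q ih =>
    rw [Walk.support_cons, List.mem_cons] at hx
    unfold projWalk
    split_ifs with he
    · rw [Walk.support_copy]
      rcases hx with rfl | hx
      · rw [he]
        exact (projWalk q).start_mem_support
      · exact ih hx
    · rw [Walk.support_cons, List.mem_cons]
      exact hx.imp (congrArg proj) ih

lemma support_tail_projWalk_sublist {w w' : ↥Uᶜ ⊕ ↥U × Fin N}
    (p : (hcpGraph G U N).Walk w w') :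
    (projWalk p).support.tail.Sublist (p.support.tail.map proj) := by
  induction p with
  | nil => simp [projWalk]
  | @cons w m _ h q ih =>
    unfold projWalk
    split_ifs
    · rw [Walk.support_copy, Walk.support_cons, List.tail_cons, ← q.cons_tail_support]
      exact ih.cons _
    · rw [Walk.support_cons, Walk.support_cons, List.tail_cons, List.tail_cons,
        ← q.cons_tail_support, ← (projWalk q).cons_tail_support, List.map_cons]
      exact ih.cons_cons _

lemma count_map_proj_le_one {l : List (↥Uᶜ ⊕ ↥U × Fin N)} (hl : l.Nodup) {x : V} (hx : x ∉ U) :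
    (l.map proj).count x ≤ 1 := by
  induction l with
  | nil => simp
  | cons w l ih =>
    rw [List.nodup_cons] at hl
    rw [List.map_cons, List.count_cons]
    split_ifs with hw
    · rw [beq_iff_eq, ← eq_inl_iff_proj_eq w ⟨x, hx⟩] at hw
      subst hw
      have : x ∉ l.map proj := fun hmem => by
        obtain ⟨w', hw', hproj⟩ := List.mem_map.mp hmem
        exact hl.1 ((eq_inl_iff_proj_eq w' ⟨x, hx⟩).mpr hproj ▸ hw')
      simp [List.count_eq_zero.mpr this]
    · exact ih hl.2

theorem exists_walk_of_isHamiltonianCycle [Nontrivial V] [NeZero N] {v : ↥Uᶜ ⊕ ↥U × Fin N}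
    {C : (hcpGraph G U N).Walk v v} (hC : C.IsHamiltonianCycle) :
    ∃ (a b : V) (_ : G.Adj a b) (W : G.Walk a b),
      (∀ x, x ∈ W.support) ∧ ∀ x ∉ U, W.support.count x = 1 := by
  have hcov : ∀ x, x ∈ (projWalk C).support := fun x => by
    obtain ⟨w, rfl⟩ := proj_surjective (U := U) (N := N) x
    exact proj_mem_support_projWalk C (hC.mem_support w)
  have hnil : ¬(projWalk C).Nil := fun h => by
    obtain ⟨x, hx⟩ := exists_ne (proj v)
    simpa [Walk.nil_iff_support_eq.mp h, hx] using hcov x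
  obtain ⟨y, h, q, hq⟩ := Walk.not_nil_iff.mp hnil
  have hcovq : ∀ x, x ∈ q.support := fun x => by
    have hx := hcov x
    rw [hq, Walk.support_cons, List.mem_cons] at hx
    exact hx.elim (· ▸ q.end_mem_support) id
  have hsub : q.support.Sublist (C.support.tail.map proj) := by
    simpa [hq] using support_tail_projWalk_sublist C
  refine ⟨y, proj v, h.symm, q, hcovq, fun x hx => le_antisymm ?_ ?_⟩
  · exact (hsub.count_le x).trans (count_map_proj_le_one hC.isCycle.support_nodup hx)
  · exact List.count_pos_iff.mpr (hcovq x)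

end Projection

section Lift

def bottomCopy : ↥Uᶜ ⊕ ↥U × Fin N → ↥Uᶜ ⊕ ↥U × Fin N
  | .inl z => .inl z
  | .inr (u, i) => .inr (u, ⟨0, i.pos⟩)

@[simp] lemma proj_bottomCopy (w : ↥Uᶜ ⊕ ↥U × Fin N) : proj (bottomCopy w) = proj w := by
  rcases w with _ | ⟨_, _⟩ <;> rfl

def descendCopies (u : ↥U) : (i : ℕ) → (hi : i < N) →
    (hcpGraph G U N).Walk (.inr (u, ⟨i, hi⟩)) (.inr (u, ⟨0, by omega⟩))
  | 0, _ => .nil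
  | i + 1, hi => .cons (adj_inr_succ u hi).symm (descendCopies u i (by omega))

lemma mem_support_descendCopies (u : ↥U) (i : ℕ) (hi : i < N) (w : ↥Uᶜ ⊕ ↥U × Fin N) :
    w ∈ (descendCopies (G := G) u i hi).support ↔ proj w = u ∧ copyIndex w ≤ i := by
  induction i with
  | zero => simp [descendCopies, eq_iff_proj_eq_and_copyIndex_eq]
  | succ i ih =>
    rw [descendCopies, Walk.support_cons, List.mem_cons, ih, eq_iff_proj_eq_and_copyIndex_eq]
    simp only [proj_inr, copyIndex_inr, ← and_or_left]
    exact and_congr_right fun _ => by omega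

lemma support_descendCopies_nodup (u : ↥U) (i : ℕ) (hi : i < N) :
    (descendCopies (G := G) u i hi).support.Nodup := by
  induction i with
  | zero => simp [descendCopies]
  | succ i ih => simp [descendCopies, ih, mem_support_descendCopies]

def descend : (w : ↥Uᶜ ⊕ ↥U × Fin N) → (hcpGraph G U N).Walk w (bottomCopy w)
  | .inl _ => .nil
  | .inr (u, i) => descendCopies u i i.2

lemma mem_support_descend (w w' : ↥Uᶜ ⊕ ↥U × Fin N) :
    w' ∈ (descend (G := G) w).support ↔ proj w' = proj w ∧ copyIndex w' ≤ copyIndex w := by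
  rcases w with z | ⟨u, i, hi⟩
  · change w' ∈ [_] ↔ _
    simp [eq_iff_proj_eq_and_copyIndex_eq]
  · exact mem_support_descendCopies u i hi w'

lemma support_descend_nodup (w : ↥Uᶜ ⊕ ↥U × Fin N) : (descend (G := G) w).support.Nodup := by
  rcases w with z | ⟨u, i, hi⟩
  · exact List.nodup_singleton _
  · exact support_descendCopies_nodup u i hi

variable [DecidablePred (· ∈ U)]

def copyOf (x : V) (i : Fin N) : ↥Uᶜ ⊕ ↥U × Fin N :=
  if hx : x ∈ U then .inr (⟨x, hx⟩, i) else .inl ⟨x, hx⟩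

@[simp] lemma proj_copyOf (x : V) (i : Fin N) : proj (U := U) (copyOf x i) = x := by
  unfold copyOf; split_ifs <;> rfl

lemma copyIndex_copyOf_ofNat [NeZero N] (x : V) {n : ℕ} (hn : n < N) :
    copyIndex (U := U) (copyOf x (Fin.ofNat N n)) = if x ∈ U then n else 0 := by
  unfold copyOf
  split_ifs
  · exact (Fin.val_ofNat N n).trans (Nat.mod_eq_of_lt hn)
  · rfl

variable [DecidableEq V] [NeZero N]

def liftWalk (e : V → ℕ) : {x y : V} → (p : G.Walk x y) →
    (hcpGraph G U N).Walk (copyOf x (Fin.ofNat N (e x + p.support.tail.count x)))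
      (bottomCopy (copyOf y (Fin.ofNat N (e y))))
  | _, _, .nil => descend _
  | x, _, .cons h q =>
    if q.support.count x = 0 then
      (descend _).append (.cons (adj_of_adj_proj (by simpa using h)) (liftWalk e q))
    else .cons (adj_of_adj_proj (by simpa using h)) (liftWalk e q)

lemma support_liftWalk_cons (e : V → ℕ) {x y z : V} (h : G.Adj x y) (q : G.Walk y z) :
    (liftWalk (U := U) (N := N) e (.cons h q)).support =
      if q.support.count x = 0 then
        (descend (G := G) (copyOf x (Fin.ofNat N (e x + q.support.count x)))).support ++
          (liftWalk e q).support
      else copyOf x (Fin.ofNat N (e x + q.support.count x)) :: (liftWalk e q).support := by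
  rw [liftWalk]
  split_ifs
  · exact Walk.support_append _ _
  · rfl

lemma mem_support_liftWalk (e : V → ℕ) {x y : V} (p : G.Walk x y)
    (hcap : ∀ v, e v + p.support.count v ≤ N) (w : ↥Uᶜ ⊕ ↥U × Fin N) :
    w ∈ (liftWalk e p).support ↔
      proj w ∈ p.support ∧ copyIndex w < e (proj w) + p.support.count (proj w) := by
  induction p with
  | @nil x =>
    have hx : e x < N := by simpa using hcap x
    change w ∈ (descend (copyOf x (Fin.ofNat N (e x)))).support ↔ _
    rw [mem_support_descend, proj_copyOf, copyIndex_copyOf_ofNat _ hx]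
    by_cases hw : proj w = x
    · subst hw
      by_cases hU : proj w ∈ U
      · simp [hU]
      · simp [hU, copyIndex_eq_zero]
    · simp [hw]
  | @cons x y z h q ih =>
    have hcap' : ∀ v, e v + q.support.count v ≤ N := fun v =>
      (Nat.add_le_add_left List.count_le_count_cons _).trans (hcap v)
    have hx : e x + q.support.count x < N := by
      have := hcap x
      rw [Walk.support_cons, List.count_cons_self] at this
      omega
    rw [support_liftWalk_cons, Walk.support_cons, List.mem_cons]
    by_cases hw : proj w = x
    · subst hw
      rw [List.count_cons_self]
      have hidx := copyIndex_copyOf_ofNat (U := U) (proj w) hx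
      by_cases hk : q.support.count (proj w) = 0
      · rw [if_pos hk, List.mem_append, mem_support_descend, ih hcap', hidx, hk]
        have : proj w ∉ q.support := List.count_eq_zero.mp hk
        by_cases hU : proj w ∈ U
        · simp [hU, this]
        · simp [hU, this, copyIndex_eq_zero]
      · rw [if_neg hk, List.mem_cons, eq_iff_proj_eq_and_copyIndex_eq, ih hcap', hidx]
        have : proj w ∈ q.support := List.count_pos_iff.mp (Nat.pos_of_ne_zero hk)
        by_cases hU : proj w ∈ U
        · simp [hU, this]; omega
        · simp [hU, this, copyIndex_eq_zero]
    · rw [List.count_cons_of_ne (Ne.symm hw)]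
      split_ifs <;> simp [hw, mem_support_descend, ih hcap', eq_iff_proj_eq_and_copyIndex_eq]

lemma support_liftWalk_nodup (e : V → ℕ) {x y : V} (p : G.Walk x y)
    (hcap : ∀ v, e v + p.support.count v ≤ N) (hsimple : ∀ v ∉ U, p.support.count v ≤ 1) :
    (liftWalk (U := U) (N := N) e p).support.Nodup := by
  induction p with
  | nil => exact support_descend_nodup _
  | @cons x y z h q ih =>
    have hcap' : ∀ v, e v + q.support.count v ≤ N := fun v =>
      (Nat.add_le_add_left List.count_le_count_cons _).trans (hcap v)
    have hx : e x + q.support.count x < N := by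
      have := hcap x
      rw [Walk.support_cons, List.count_cons_self] at this
      omega
    have ihq := ih hcap' fun v hv => List.count_le_count_cons.trans (hsimple v hv)
    rw [support_liftWalk_cons]
    split_ifs with hk
    · refine List.nodup_append.mpr ⟨support_descend_nodup _, ihq, fun a ha b hb hab => ?_⟩
      rw [mem_support_descend, proj_copyOf] at ha
      rw [mem_support_liftWalk e q hcap', ← hab, ha.1] at hb
      exact List.count_eq_zero.mp hk hb.1
    · refine List.nodup_cons.mpr ⟨fun hmem => ?_, ihq⟩
      rw [mem_support_liftWalk e q hcap', proj_copyOf, copyIndex_copyOf_ofNat _ hx] at hmem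
      by_cases hU : x ∈ U
      · simp [hU] at hmem
      · have := hsimple x hU
        rw [Walk.support_cons, List.count_cons_self] at this
        omega

end Lift

theorem exists_isHamiltonianCycle_of_walk [Fintype V] [DecidableEq V] [NeZero N]
    (hV : 3 ≤ Fintype.card V) {a b : V} (hab : G.Adj a b) (p : G.Walk a b)
    (hcov : ∀ x, x ∈ p.support) (hU : ∀ x ∉ U, p.support.count x ≤ 1)
    (hN : ∀ x, p.support.count x ≤ N) :
    ∃ (v : ↥Uᶜ ⊕ ↥U × Fin N) (C : (hcpGraph G U N).Walk v v), C.IsHamiltonianCycle := by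
  classical
  let e : V → ℕ := fun v => N - p.support.count v
  have hcap : ∀ v, e v + p.support.count v = N := fun v => Nat.sub_add_cancel (hN v)
  have hL : (liftWalk (U := U) e p).IsHamiltonian :=
    (Walk.IsPath.mk' (support_liftWalk_nodup e p (fun v => (hcap v).le) hU)).isHamiltonian_of_mem
      fun w => (mem_support_liftWalk e p (fun v => (hcap v).le) w).mpr
        ⟨hcov _, (hcap (proj w)).symm ▸ copyIndex_lt w⟩
  have hcard : 3 ≤ Fintype.card (↥Uᶜ ⊕ ↥U × Fin N) :=
    hV.trans (Fintype.card_le_of_surjective _ proj_surjective)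
  exact ⟨_, _, hL.isHamiltonianCycle_cons (adj_of_adj_proj (by simpa using hab.symm)) hcard⟩

end hcpGraph

theorem unbounded_hamiltonian_cycle_iff_hcp_construction_hamiltonian_general
    {V : Type*} [Fintype V] [DecidableEq V] (G : SimpleGraph V)
    (U : Set V) (hN : 3 ≤ Fintype.card V) :
    (∃ (a b : V) (_ : G.Adj a b) (W : G.Walk a b),
        (∀ x : V, x ∈ W.support) ∧ ∀ x ∉ U, W.support.count x = 1) ↔
    (∃ (v : (↥Uᶜ) ⊕ (↥U × Fin (Fintype.card V)))
        (C : (hcpGraph G U (Fintype.card V)).Walk v v), C.IsHamiltonianCycle) := by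
  have : NeZero (Fintype.card V) := ⟨by omega⟩
  constructor
  · rintro ⟨a, b, hab, W, hcov, hU⟩
    obtain ⟨p, hsub, hpcov, hbound⟩ := W.exists_support_sublist_forall_count_le
    exact hcpGraph.exists_isHamiltonianCycle_of_walk hN hab p (fun x => hpcov x (hcov x))
      (fun x hx => (hsub.count_le x).trans (hU x hx).le) hbound
  · rintro ⟨v, C, hC⟩
    have : Nontrivial V := Fintype.one_lt_card_iff_nontrivial.mp (by omega)
    exact hcpGraph.exists_walk_of_isHamiltonianCycle hC

/-- Let `G` be a finite connected simple graph with `N ≥ 3` vertices and `U` a subset of its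
vertices.  Then `G` has a walk visiting every vertex, with adjacent start and end vertices, in
which every vertex not in `U` occurs exactly once, if and only if the HCP construction `G'`
(with `N = |V|` copies of each vertex of `U`) has a Hamiltonian cycle. -/
theorem unbounded_hamiltonian_cycle_iff_hcp_construction_hamiltonian
    {V : Type*} [Fintype V] [DecidableEq V] (G : SimpleGraph V) (hG : G.Connected)
    (U : Set V) (hN : 3 ≤ Fintype.card V) :
    (∃ (a b : V) (_ : G.Adj a b) (W : G.Walk a b),
        (∀ x : V, x ∈ W.support) ∧ ∀ x ∉ U, W.support.count x = 1) ↔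
    (∃ (v : (↥Uᶜ) ⊕ (↥U × Fin (Fintype.card V)))
        (C : (hcpGraph G U (Fintype.card V)).Walk v v), C.IsHamiltonianCycle) :=
  unbounded_hamiltonian_cycle_iff_hcp_construction_hamiltonian_general G U hN
end
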